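/- arXiv:2005.05830 — 6 statements merged into one kernel-verified Lean document; each statement's English description precedes it below -/
import Mathlib

section
/- Let n ≥ 4 and let A be a symmetric n×n real matrix, with associated algebraic curvature tensor R of rotationally symmetric type. If R is strictly PIC2, then R is a positive curvature operator; that is, for every nonzero antisymmetric n×n real matrix φ one has Σ_{i,j,k,l} R(e_i,e_j,e_k,e_l) φ_{ij} φ_{kl} > 0, where e_1,…,e_n is the standard basis of ℝⁿ. (This is the algebraic content of Lemma 2.3: a rotationally symmetric curvature tensor in the interior of the PIC2 cone lies in the cone of positive curvature operators.) -/
open Matrix Finset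

/-!
In an orthonormal eigenbasis `u_a = U e_a` of `A` with eigenvalues `μ_a`, the curvature operator
of `R` is diagonal on the `2`-forms `u_a ∧ u_b`, with eigenvalues proportional to `μ_a + μ_b`:
`∑ R_ijkl φ_ij φ_kl = 4 tr(A φᵀφ) = 2 ∑_{a,b} (μ_a + μ_b) C_ab²` where `C = Uᵀ φ U`.
Strict PIC2 with `λ = μ = 0`, applied to an orthonormal frame `(u_a, u_c, u_b, u_d)` of
eigenvectors, gives `R(u_a, u_b, u_a, u_b) = μ_a + μ_b > 0` for `a ≠ b`; the two extra
eigenvectors are why `n ≥ 4` is needed.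
-/

def rotationalCurvature {n : Type*} [Fintype n] (A : Matrix n n ℝ) (x y z w : n → ℝ) : ℝ :=
  (x ⬝ᵥ z) * (A *ᵥ y ⬝ᵥ w) + (y ⬝ᵥ w) * (A *ᵥ x ⬝ᵥ z)
    - (x ⬝ᵥ w) * (A *ᵥ y ⬝ᵥ z) - (y ⬝ᵥ z) * (A *ᵥ x ⬝ᵥ w)

section
variable {n : Type*} [Fintype n]

lemma rotationalCurvature_of_eigenvectors {A : Matrix n n ℝ} {u v : n → ℝ} {α β : ℝ}
    (hu : u ⬝ᵥ u = 1) (hv : v ⬝ᵥ v = 1) (huv : u ⬝ᵥ v = 0)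
    (hAu : A *ᵥ u = α • u) (hAv : A *ᵥ v = β • v) :
    rotationalCurvature A u v u v = α + β := by
  simp [rotationalCurvature, hAu, hAv, hu, hv, huv, dotProduct_comm v u, add_comm]

lemma sum_antisymmetrize_mul_mul (T : n → n → n → n → ℝ) {φ : Matrix n n ℝ} (hφ : φᵀ = -φ) :
    ∑ i, ∑ j, ∑ k, ∑ l, (T i j k l + T j i l k - T i j l k - T j i k l) * φ i j * φ k l =
      4 * ∑ i, ∑ j, ∑ k, ∑ l, T i j k l * φ i j * φ k l := by
  have hφ' : ∀ i j, φ j i = -φ i j := fun i j => by simpa using congrFun (congrFun hφ i) j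
  have flip_ij : ∀ F : n → n → n → n → ℝ, ∑ i, ∑ j, ∑ k, ∑ l, F j i k l * φ i j * φ k l =
      -∑ i, ∑ j, ∑ k, ∑ l, F i j k l * φ i j * φ k l := fun F => by
    rw [sum_comm]
    simp only [← sum_neg_distrib]
    refine sum_congr rfl fun i _ => sum_congr rfl fun j _ => sum_congr rfl fun k _ =>
      sum_congr rfl fun l _ => ?_
    rw [hφ' i j]; ring
  have flip_kl : ∀ F : n → n → n → n → ℝ, ∑ i, ∑ j, ∑ k, ∑ l, F i j l k * φ i j * φ k l =
      -∑ i, ∑ j, ∑ k, ∑ l, F i j k l * φ i j * φ k l := fun F => by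
    simp only [← sum_neg_distrib]
    refine sum_congr rfl fun i _ => sum_congr rfl fun j _ => ?_
    rw [sum_comm]
    refine sum_congr rfl fun k _ => sum_congr rfl fun l _ => ?_
    rw [hφ' k l]; ring
  simp only [add_mul, sub_mul, sum_add_distrib, sum_sub_distrib]
  rw [flip_ij fun i j k l => T i j l k, flip_kl T, flip_ij T]
  ring

lemma sum_mul_sq_pos_of_transpose_eq_neg {μ : n → ℝ} (hμ : ∀ a b, a ≠ b → 0 < μ a + μ b)
    {C : Matrix n n ℝ} (hC : Cᵀ = -C) (hC0 : C ≠ 0) : 0 < ∑ a, ∑ b, μ b * C a b ^ 2 := by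
  have hC' : ∀ a b, C b a = -C a b := fun a b => by simpa using congrFun (congrFun hC a) b
  have hdiag : ∀ a, C a a = 0 := fun a => by linarith [hC' a a]
  have hsymm : 2 * ∑ a, ∑ b, μ b * C a b ^ 2 = ∑ a, ∑ b, (μ a + μ b) * C a b ^ 2 := by
    rw [two_mul]
    nth_rewrite 1 [sum_comm]
    simp only [← sum_add_distrib]
    refine sum_congr rfl fun a _ => sum_congr rfl fun b _ => ?_
    rw [hC' b a, neg_sq]
    ring
  have hterm : ∀ a b, 0 ≤ (μ a + μ b) * C a b ^ 2 := fun a b => by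
    rcases eq_or_ne a b with rfl | hab
    · simp [hdiag]
    · exact mul_nonneg (hμ a b hab).le (sq_nonneg _)
  obtain ⟨a, b, hab⟩ : ∃ a b, C a b ≠ 0 := by
    by_contra! h
    exact hC0 (ext h)
  have hne : a ≠ b := by rintro rfl; exact hab (hdiag a)
  have hpos : 0 < ∑ a, ∑ b, (μ a + μ b) * C a b ^ 2 :=
    sum_pos' (fun a _ => sum_nonneg fun b _ => hterm a b)
      ⟨a, mem_univ a, sum_pos' (fun b _ => hterm a b)
        ⟨b, mem_univ b, mul_pos (hμ a b hne) (by positivity)⟩⟩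
  linarith

variable [DecidableEq n]

lemma rotationalCurvature_single (A : Matrix n n ℝ) (i j k l : n) :
    rotationalCurvature A (Pi.single i 1) (Pi.single j 1) (Pi.single k 1) (Pi.single l 1) =
      (if i = k then A l j else 0) + (if j = l then A k i else 0)
        - (if i = l then A k j else 0) - (if j = k then A l i else 0) := by
  simp [rotationalCurvature, dotProduct_single, Pi.single_apply, eq_comm]

lemma sum_ite_mul_mul_eq_trace (A φ : Matrix n n ℝ) :
    ∑ i, ∑ j, ∑ k, ∑ l, (if i = k then A l j else 0) * φ i j * φ k l = trace (A * (φᵀ * φ)) := by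
  have collapse : ∀ i j, ∑ k, ∑ l, (if i = k then A l j else 0) * φ i j * φ k l =
      ∑ l, A l j * φ i j * φ i l := fun i j => by
    rw [sum_comm]; simp [ite_mul]
  simp only [collapse, trace, diag_apply, mul_apply, transpose_apply, mul_sum]
  rw [sum_comm_cycle]
  refine sum_congr rfl fun l _ => ?_
  rw [sum_comm]
  exact sum_congr rfl fun j _ => sum_congr rfl fun i _ => by ring

lemma sum_rotationalCurvature_single_mul_mul (A : Matrix n n ℝ) {φ : Matrix n n ℝ}
    (hφ : φᵀ = -φ) :
    ∑ i, ∑ j, ∑ k, ∑ l, rotationalCurvature A (Pi.single i 1) (Pi.single j 1) (Pi.single k 1)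
      (Pi.single l 1) * φ i j * φ k l = 4 * trace (A * (φᵀ * φ)) := by
  simp only [rotationalCurvature_single]
  rw [sum_antisymmetrize_mul_mul (fun i j k l => if i = k then A l j else 0) hφ,
    sum_ite_mul_mul_eq_trace]

lemma trace_diagonal_mul_transpose_mul_self (μ : n → ℝ) (C : Matrix n n ℝ) :
    trace (diagonal μ * (Cᵀ * C)) = ∑ a, ∑ b, μ b * C a b ^ 2 := by
  simp only [trace, diag_apply, diagonal_mul]
  simp only [mul_apply, transpose_apply, mul_sum, sq]
  exact sum_comm

lemma Matrix.IsHermitian.trace_mul_transpose_mul_self_pos {A : Matrix n n ℝ} (hA : A.IsHermitian)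
    (hμ : ∀ a b, a ≠ b → 0 < hA.eigenvalues a + hA.eigenvalues b) {φ : Matrix n n ℝ}
    (hφ : φᵀ = -φ) (hφ0 : φ ≠ 0) : 0 < trace (A * (φᵀ * φ)) := by
  set U := (hA.eigenvectorUnitary : Matrix n n ℝ)
  have hUU : U * Uᵀ = 1 := hA.eigenvectorUnitary.2.2
  have hU : ∀ M, U * (Uᵀ * M) = M := fun M => by rw [← Matrix.mul_assoc, hUU, Matrix.one_mul]
  have hD : Uᵀ * A * U = diagonal hA.eigenvalues := by
    simpa [U, star_eq_conjTranspose] using hA.conjStarAlgAut_star_eigenvectorUnitary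
  set C := Uᵀ * φ * U
  have htr : trace (A * (φᵀ * φ)) = trace (diagonal hA.eigenvalues * (Cᵀ * C)) := by
    rw [← hD]
    simp only [C, transpose_mul, transpose_transpose, Matrix.mul_assoc, hU]
    rw [trace_mul_comm Uᵀ]
    simp only [Matrix.mul_assoc, hUU, Matrix.mul_one]
  have hC : Cᵀ = -C := by simp [C, transpose_mul, hφ, Matrix.mul_assoc]
  have hC0 : C ≠ 0 := by
    intro h
    have hφC : U * C * Uᵀ = φ := by simp only [C, Matrix.mul_assoc, hU, hUU, Matrix.mul_one]
    exact hφ0 (by rw [← hφC, h, Matrix.mul_zero, Matrix.zero_mul])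
  rw [htr, trace_diagonal_mul_transpose_mul_self]
  exact sum_mul_sq_pos_of_transpose_eq_neg hμ hC hC0

lemma Matrix.IsHermitian.eigenvectorBasis_dotProduct {A : Matrix n n ℝ} (hA : A.IsHermitian)
    (a b : n) :
    (hA.eigenvectorBasis a).ofLp ⬝ᵥ (hA.eigenvectorBasis b).ofLp = if a = b then 1 else 0 := by
  rw [← orthonormal_iff_ite.mp hA.eigenvectorBasis.orthonormal a b,
    EuclideanSpace.inner_eq_star_dotProduct, dotProduct_comm]
  simp

end

lemma exists_injective_fin_four {ι : Type*} [Fintype ι] (h : 4 ≤ Fintype.card ι) {a b : ι}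
    (hab : a ≠ b) : ∃ f : Fin 4 → ι, Function.Injective f ∧ f 0 = a ∧ f 2 = b := by
  classical
  have hcard : 1 < #({a, b}ᶜ : Finset ι) := by
    rw [card_compl, card_pair hab]; omega
  obtain ⟨c, hc, d, hd, hcd⟩ := one_lt_card.mp hcard
  simp only [mem_compl, mem_insert, mem_singleton, not_or] at hc hd
  refine ⟨![a, c, b, d], fun i j hij => ?_, rfl, rfl⟩
  fin_cases i <;> fin_cases j <;> simp_all [eq_comm]

/-- A rotationally symmetric algebraic curvature tensor (built from a
symmetric matrix `A`) that is strictly PIC2 is a positive curvature operator. -/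
theorem rotationally_symmetric_strictly_PIC2_implies_positive_curvature_operator
    (n : ℕ) (hn : 4 ≤ n) (A : Matrix (Fin n) (Fin n) ℝ) (hA : A.IsSymm)
    (R : (Fin n → ℝ) → (Fin n → ℝ) → (Fin n → ℝ) → (Fin n → ℝ) → ℝ)
    (hR : ∀ x y z w : Fin n → ℝ, R x y z w =
      (x ⬝ᵥ z) * ((A.mulVec y) ⬝ᵥ w) + (y ⬝ᵥ w) * ((A.mulVec x) ⬝ᵥ z)
        - (x ⬝ᵥ w) * ((A.mulVec y) ⬝ᵥ z) - (y ⬝ᵥ z) * ((A.mulVec x) ⬝ᵥ w))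
    (hPIC2 : ∀ e : Fin 4 → (Fin n → ℝ),
      (∀ i, e i ⬝ᵥ e i = 1) → (∀ i j, i ≠ j → e i ⬝ᵥ e j = 0) →
      ∀ lam mu : ℝ, lam ∈ Set.Icc (0:ℝ) 1 → mu ∈ Set.Icc (0:ℝ) 1 →
        0 < R (e 0) (e 2) (e 0) (e 2) + lam ^ 2 * R (e 0) (e 3) (e 0) (e 3)
            + mu ^ 2 * R (e 1) (e 2) (e 1) (e 2)
            + lam ^ 2 * mu ^ 2 * R (e 1) (e 3) (e 1) (e 3)
            - 2 * lam * mu * R (e 0) (e 1) (e 2) (e 3))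
    (φ : Matrix (Fin n) (Fin n) ℝ) (hφ : φᵀ = -φ) (hφ0 : φ ≠ 0) :
    0 < ∑ i, ∑ j, ∑ k, ∑ l,
      R (Pi.single i 1) (Pi.single j 1) (Pi.single k 1) (Pi.single l 1) * φ i j * φ k l := by
  obtain rfl : R = rotationalCurvature A := by
    funext x y z w
    exact hR x y z w
  have hAh : A.IsHermitian := isHermitian_iff_isSymm.mpr hA
  rw [sum_rotationalCurvature_single_mul_mul A hφ]
  refine mul_pos four_pos (hAh.trace_mul_transpose_mul_self_pos (fun a b hab => ?_) hφ hφ0)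
  obtain ⟨f, hf, rfl, rfl⟩ := exists_injective_fin_four (by simpa using hn) hab
  let e i := (hAh.eigenvectorBasis (f i)).ofLp
  have he : ∀ i j, e i ⬝ᵥ e j = if i = j then 1 else 0 := fun i j => by
    simp only [e, hAh.eigenvectorBasis_dotProduct, hf.eq_iff]
  have hsec := hPIC2 e (fun i => by simp [he]) (fun i j hij => by simp [he, hij]) 0 0
    (by simp) (by simp)
  have hR02 : rotationalCurvature A (e 0) (e 2) (e 0) (e 2) =
      hAh.eigenvalues (f 0) + hAh.eigenvalues (f 2) :=
    rotationalCurvature_of_eigenvectors (by simp [he]) (by simp [he]) (by simp [he])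
      (hAh.mulVec_eigenvectorBasis _) (hAh.mulVec_eigenvectorBasis _)
  simpa [hR02] using hsec
end

section
/- Let n ≥ 2 and let A be a symmetric n×n real matrix with the property that ⟨Av,v⟩ + ⟨Aw,w⟩ > 0 for every pair of orthonormal vectors v,w ∈ ℝⁿ. Then tr(A φ φᵀ) > 0 for every nonzero antisymmetric n×n real matrix φ. -/
open Matrix

/-!
Diagonalise `A = U D Uᵀ` with `U` orthogonal and `D = diagonal d`. The columns of `U` are
orthonormal eigenvectors, so two-positivity gives `d i + d j > 0` for `i ≠ j`. Conjugating by `U`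
turns `φ` into the nonzero antisymmetric matrix `ψ = Uᵀ φ U` and `tr(A φ φᵀ)` into
`∑ i j, d i ψᵢⱼ² = ½ ∑ i j, (d i + d j) ψᵢⱼ²`; as `ψᵢᵢ = 0`, only pairs `i ≠ j` contribute.
-/

namespace Matrix

variable {ι R : Type*} [Fintype ι]

def IsTwoPositive (A : Matrix ι ι ℝ) : Prop :=
  ∀ v w : ι → ℝ, v ⬝ᵥ v = 1 → w ⬝ᵥ w = 1 → v ⬝ᵥ w = 0 → 0 < A *ᵥ v ⬝ᵥ v + A *ᵥ w ⬝ᵥ w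

theorem IsSymm.exists_transpose_mul_mul_eq_diagonal [DecidableEq ι]
    {A : Matrix ι ι ℝ} (hA : A.IsSymm) :
    ∃ U : Matrix ι ι ℝ, Uᵀ * U = 1 ∧ ∃ d : ι → ℝ, Uᵀ * A * U = diagonal d := by
  have hH : A.IsHermitian := isHermitian_iff_isSymm.mpr hA
  have hstar : star (hH.eigenvectorUnitary : Matrix ι ι ℝ) = (hH.eigenvectorUnitary)ᵀ :=
    conjTranspose_eq_transpose_of_trivial _
  refine ⟨hH.eigenvectorUnitary, ?_, hH.eigenvalues, ?_⟩
  · rw [← hstar]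
    exact Unitary.coe_star_mul_self hH.eigenvectorUnitary
  · have h := hH.conjStarAlgAut_star_eigenvectorUnitary
    rw [Unitary.conjStarAlgAut_star_apply, hstar] at h
    simpa using h

theorem transpose_mul_self_apply [CommSemiring R] (U : Matrix ι ι R) (i j : ι) :
    (Uᵀ * U) i j = Uᵀ i ⬝ᵥ Uᵀ j :=
  mul_apply' ..

theorem transpose_mul_mul_apply_self [CommSemiring R] (U A : Matrix ι ι R) (i : ι) :
    (Uᵀ * A * U) i i = A *ᵥ Uᵀ i ⬝ᵥ Uᵀ i := by
  rw [Matrix.mul_assoc, mul_apply', dotProduct_comm]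
  rfl

theorem IsTwoPositive.transpose_mul_mul_apply_add_pos [DecidableEq ι] {A U : Matrix ι ι ℝ}
    (hA : A.IsTwoPositive) (hU : Uᵀ * U = 1) {i j : ι} (hij : i ≠ j) :
    0 < (Uᵀ * A * U) i i + (Uᵀ * A * U) j j := by
  have hcol : ∀ k l, Uᵀ k ⬝ᵥ Uᵀ l = (1 : Matrix ι ι ℝ) k l := fun k l => by
    rw [← hU, transpose_mul_self_apply]
  simpa only [transpose_mul_mul_apply_self] using
    hA _ _ (by simpa using hcol i i) (by simpa using hcol j j) (by simpa [hij] using hcol i j)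

theorem trace_conj_mul_mul_transpose [DecidableEq ι] [CommRing R] {U : Matrix ι ι R}
    (hU : Uᵀ * U = 1) (A φ : Matrix ι ι R) :
    trace ((Uᵀ * A * U) * (Uᵀ * φ * U) * (Uᵀ * φ * U)ᵀ) = trace (A * φ * φᵀ) := by
  have hcancel : ∀ X : Matrix ι ι R, U * (Uᵀ * X) = X := fun X => by
    rw [← Matrix.mul_assoc, mul_eq_one_comm.mp hU, Matrix.one_mul]
  simp only [transpose_mul, transpose_transpose, Matrix.mul_assoc, hcancel]
  rw [trace_mul_comm]
  simp only [Matrix.mul_assoc, mul_eq_one_comm.mp hU, Matrix.mul_one]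

theorem trace_diagonal_mul_mul_transpose [CommSemiring R] [DecidableEq ι] (d : ι → R)
    (ψ : Matrix ι ι R) :
    trace (diagonal d * ψ * ψᵀ) = ∑ i, ∑ j, d i * ψ i j ^ 2 := by
  rw [Matrix.mul_assoc]
  simp only [trace, diag_apply, diagonal_mul]
  simp only [mul_apply, transpose_apply, Finset.mul_sum, sq]

theorem sum_sum_mul_sq_pos_of_transpose_eq_neg {d : ι → ℝ} {ψ : Matrix ι ι ℝ}
    (hψ : ψᵀ = -ψ) (hψ0 : ψ ≠ 0) (hd : ∀ i j, i ≠ j → 0 < d i + d j) :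
    0 < ∑ i, ∑ j, d i * ψ i j ^ 2 := by
  have hswap : ∀ i j, ψ j i = -ψ i j := fun i j => by
    simpa using congrFun (congrFun hψ i) j
  have hdiag : ∀ i, ψ i i = 0 := fun i => by linarith [hswap i i]
  have htwice : 2 * ∑ i, ∑ j, d i * ψ i j ^ 2 = ∑ i, ∑ j, (d i + d j) * ψ i j ^ 2 := by
    have hsq : ∀ i j, ψ j i ^ 2 = ψ i j ^ 2 := fun i j => by rw [hswap, neg_sq]
    simp_rw [add_mul, Finset.sum_add_distrib, two_mul]
    rw [Finset.sum_comm (f := fun i j => d j * ψ i j ^ 2)]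
    simp only [hsq]
  have hterm : ∀ i j, 0 ≤ (d i + d j) * ψ i j ^ 2 := fun i j => by
    rcases eq_or_ne i j with rfl | hij
    · simp [hdiag]
    · exact mul_nonneg (hd i j hij).le (sq_nonneg _)
  obtain ⟨i, j, hij⟩ : ∃ i j, ψ i j ≠ 0 := by
    simpa [← Matrix.ext_iff] using hψ0
  have hne : i ≠ j := by rintro rfl; exact hij (hdiag i)
  have hpos : 0 < ∑ i, ∑ j, (d i + d j) * ψ i j ^ 2 :=
    Finset.sum_pos' (fun k _ => Finset.sum_nonneg fun l _ => hterm k l)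
      ⟨i, Finset.mem_univ _, Finset.sum_pos' (fun l _ => hterm i l)
        ⟨j, Finset.mem_univ _, mul_pos (hd i j hne) (by positivity)⟩⟩
  linarith

end Matrix

theorem two_positive_implies_positive_on_antisymmetric_general
    (n : ℕ) (A : Matrix (Fin n) (Fin n) ℝ) (hA : A.IsSymm)
    (hpos : ∀ v w : Fin n → ℝ, v ⬝ᵥ v = 1 → w ⬝ᵥ w = 1 → v ⬝ᵥ w = 0 →
      0 < (A.mulVec v) ⬝ᵥ v + (A.mulVec w) ⬝ᵥ w)
    (φ : Matrix (Fin n) (Fin n) ℝ) (hφ : φᵀ = -φ) (hφ0 : φ ≠ 0) :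
    0 < Matrix.trace (A * φ * φᵀ) := by
  obtain ⟨U, hU, d, hUAU⟩ := hA.exists_transpose_mul_mul_eq_diagonal
  set ψ := Uᵀ * φ * U
  have hψ : ψᵀ = -ψ := by simp [ψ, transpose_mul, hφ, Matrix.mul_assoc]
  have hψ0 : ψ ≠ 0 := by
    rintro hψ_eq
    have hUUt : U * Uᵀ = 1 := mul_eq_one_comm.mp hU
    apply hφ0
    calc φ = U * ψ * Uᵀ := by
          rw [← Matrix.mul_assoc, ← Matrix.mul_assoc, hUUt, Matrix.one_mul, Matrix.mul_assoc, hUUt,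
            Matrix.mul_one]
      _ = 0 := by rw [hψ_eq, Matrix.mul_zero, Matrix.zero_mul]
  have hd : ∀ i j, i ≠ j → 0 < d i + d j := fun i j hij => by
    simpa [hUAU] using IsTwoPositive.transpose_mul_mul_apply_add_pos hpos hU hij
  rw [← trace_conj_mul_mul_transpose hU, hUAU, trace_diagonal_mul_mul_transpose]
  exact sum_sum_mul_sq_pos_of_transpose_eq_neg hψ hψ0 hd

/-- If a symmetric matrix `A` is two-positive, i.e.
`⟨Av,v⟩ + ⟨Aw,w⟩ > 0` for every orthonormal pair `v, w`, then
`tr(A φ φᵀ) > 0` for every nonzero antisymmetric matrix `φ`. -/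
theorem two_positive_implies_positive_on_antisymmetric
    (n : ℕ) (hn : 2 ≤ n) (A : Matrix (Fin n) (Fin n) ℝ) (hA : A.IsSymm)
    (hpos : ∀ v w : Fin n → ℝ, v ⬝ᵥ v = 1 → w ⬝ᵥ w = 1 → v ⬝ᵥ w = 0 →
      0 < (A.mulVec v) ⬝ᵥ v + (A.mulVec w) ⬝ᵥ w)
    (φ : Matrix (Fin n) (Fin n) ℝ) (hφ : φᵀ = -φ) (hφ0 : φ ≠ 0) :
    0 < Matrix.trace (A * φ * φᵀ) :=
  two_positive_implies_positive_on_antisymmetric_general n A hA hpos φ hφ hφ0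
end

section
/- Let n ≥ 3 and set N = n(n−1)/2. There exists a constant C > 0 (depending only on n) with the following property. For every basis {σ^(a) : 1 ≤ a ≤ N} of so(n) that is orthonormal with respect to the inner product ⟨A,B⟩ = ½ tr(AᵀB), there exist real constants {k_{abc} : 1 ≤ a,b,c ≤ N} such that |k_{abc}| ≤ C for all a,b,c and σ^(a) = Σ_{b,c=1}^{N} k_{abc} [σ^(b), σ^(c)] for every a. -/
/-!
In coordinates `X ↦ (X i j)_{i<j}` the form `½ tr(XᵀY)` is the dot product, so the `N × N` matrix
of coordinates of an orthonormal basis `σ` is orthogonal; hence its columns are orthonormal too,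
which says that `E_ij = ∑_b σ^(b)_ij σ^(b)` and that all entries of all `σ^(b)` lie in `[-1, 1]`.
For `i < j` pick a third index `m`; then `E_ij = [E_im, E_mj]`, and expanding `σ^(a)` in the
`E_ij` and then `E_im`, `E_mj` in the `σ^(b)` writes `σ^(a)` as a combination of brackets
`[σ^(b), σ^(c)]` whose coefficients are sums of `N` products of three entries, so `C = N` works.
-/

open Matrix Finset

abbrev LtPair (ι : Type*) [LT ι] := {p : ι × ι // p.1 < p.2}

section LtPair

variable {ι : Type*} [Fintype ι] [LinearOrder ι]

theorem card_ltPair : Fintype.card (LtPair ι) = (Fintype.card ι).choose 2 := by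
  rw [Fintype.card_subtype]
  exact Fintype.card_product_filter_lt

theorem sum_sum_eq_two_nsmul_sum_ltPair {M : Type*} [AddCommMonoid M] {f : ι → ι → M}
    (hsymm : ∀ i j, f i j = f j i) (hdiag : ∀ i, f i i = 0) :
    ∑ i, ∑ j, f i j = 2 • ∑ p : LtPair ι, f p.1.1 p.1.2 := by
  have hsplit : ∀ i j, f i j = (if i < j then f i j else 0) + (if j < i then f j i else 0) := by
    intro i j
    rcases lt_trichotomy i j with h | rfl | h
    · simp [h, h.not_gt]
    · simp [hdiag]
    · simp [h, h.not_gt, hsymm i j]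
  have hupper : ∑ i, ∑ j, (if i < j then f i j else 0) = ∑ p : LtPair ι, f p.1.1 p.1.2 := by
    rw [← Fintype.sum_prod_type' (f := fun i j => if i < j then f i j else 0), ← sum_filter,
      sum_subtype]
    simp
  rw [sum_congr rfl fun i _ => sum_congr rfl fun j _ => hsplit i j]
  simp only [sum_add_distrib]
  rw [sum_comm (f := fun i j => if j < i then f j i else 0), hupper, two_nsmul]

theorem exists_ne_and_ne_of_three_le_card (h : 3 ≤ Fintype.card ι) (i j : ι) :
    ∃ m, m ≠ i ∧ m ≠ j := by
  have : #{i, j} < #(univ : Finset ι) := card_le_two.trans_lt (by rw [card_univ]; omega)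
  obtain ⟨m, -, hm⟩ := exists_mem_notMem_of_card_lt_card this
  exact ⟨m, by simpa [not_or] using hm⟩

end LtPair

theorem sum_smul_commutator_sum_smul {R A β γ : Type*} [CommSemiring R] [Ring A] [Algebra R A]
    (s : Finset β) (t : Finset γ) (x : β → R) (y : γ → R) (u : β → A) (v : γ → A) :
    (∑ b ∈ s, x b • u b) * (∑ c ∈ t, y c • v c) - (∑ c ∈ t, y c • v c) * (∑ b ∈ s, x b • u b) =
      ∑ b ∈ s, ∑ c ∈ t, (x b * y c) • (u b * v c - v c * u b) := by
  simp only [sum_mul, mul_sum, smul_mul_smul_comm, smul_sub, sum_sub_distrib]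
  rw [sum_comm (s := t)]
  simp only [mul_comm (y _)]

namespace Matrix

section Skew

variable {ι R : Type*}

theorem apply_swap_of_transpose_eq_neg [Neg R] {X : Matrix ι ι R} (hX : Xᵀ = -X) (i j : ι) :
    X j i = -X i j := by
  simpa using congrFun (congrFun hX i) j

variable [Ring R] [NoZeroDivisors R] [CharZero R]

theorem apply_self_of_transpose_eq_neg {X : Matrix ι ι R} (hX : Xᵀ = -X) (i : ι) : X i i = 0 :=
  CharZero.eq_neg_self_iff.mp (apply_swap_of_transpose_eq_neg hX i i)

theorem ext_of_transpose_eq_neg [LinearOrder ι] {X Y : Matrix ι ι R} (hX : Xᵀ = -X)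
    (hY : Yᵀ = -Y) (h : ∀ p : LtPair ι, X p.1.1 p.1.2 = Y p.1.1 p.1.2) : X = Y := by
  ext i j
  rcases lt_trichotomy i j with hij | rfl | hij
  · exact h ⟨(i, j), hij⟩
  · rw [apply_self_of_transpose_eq_neg hX, apply_self_of_transpose_eq_neg hY]
  · rw [apply_swap_of_transpose_eq_neg hX, apply_swap_of_transpose_eq_neg hY, h ⟨(j, i), hij⟩]

end Skew

theorem trace_transpose_mul_eq_two_mul_sum_ltPair {ι R : Type*} [Fintype ι] [LinearOrder ι]
    [CommRing R] [NoZeroDivisors R] [CharZero R] {X Y : Matrix ι ι R} (hX : Xᵀ = -X)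
    (hY : Yᵀ = -Y) :
    trace (Xᵀ * Y) = 2 * ∑ p : LtPair ι, X p.1.1 p.1.2 * Y p.1.1 p.1.2 := by
  have h := sum_sum_eq_two_nsmul_sum_ltPair (f := fun i j => X i j * Y i j)
    (fun i j => by
      rw [apply_swap_of_transpose_eq_neg hX, apply_swap_of_transpose_eq_neg hY, neg_mul_neg])
    (fun i => by rw [apply_self_of_transpose_eq_neg hX, zero_mul])
  rw [two_mul, ← two_nsmul, ← h, trace, sum_comm]
  simp [mul_apply]

section SkewSingle

variable {ι R : Type*} [DecidableEq ι] [Ring R]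

/-- The matrix `E_ij` of the standard basis of `so(n)`. -/
def skewSingle (i j : ι) : Matrix ι ι R := single i j 1 - single j i 1

theorem transpose_skewSingle (i j : ι) : (skewSingle i j : Matrix ι ι R)ᵀ = -skewSingle i j := by
  simp [skewSingle]

theorem skewSingle_swap (i j : ι) : (skewSingle j i : Matrix ι ι R) = -skewSingle i j := by
  simp [skewSingle]

theorem skewSingle_self (i : ι) : (skewSingle i i : Matrix ι ι R) = 0 := sub_self _

theorem skewSingle_apply_ltPair [LinearOrder ι] (p q : LtPair ι) :
    (skewSingle p.1.1 p.1.2 : Matrix ι ι R) q.1.1 q.1.2 = if p = q then 1 else 0 := by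
  have : ¬ (p.1.2 = q.1.1 ∧ p.1.1 = q.1.2) := fun h => (p.2.trans (h.1 ▸ h.2 ▸ q.2)).false
  simp [skewSingle, single_apply, this, Subtype.ext_iff, Prod.ext_iff]

theorem skewSingle_commutator [Fintype ι] {i m j : ι} (him : i ≠ m) (hmj : m ≠ j) (hij : i ≠ j) :
    skewSingle i m * skewSingle m j - skewSingle m j * skewSingle i m =
      (skewSingle i j : Matrix ι ι R) := by
  simp [skewSingle, sub_mul, mul_sub, him, hmj, hij, him.symm, hmj.symm, hij.symm]

theorem eq_sum_smul_skewSingle [Fintype ι] [LinearOrder ι] [NoZeroDivisors R] [CharZero R]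
    {X : Matrix ι ι R} (hX : Xᵀ = -X) :
    X = ∑ p : LtPair ι, X p.1.1 p.1.2 • skewSingle p.1.1 p.1.2 := by
  refine ext_of_transpose_eq_neg hX
    (by simp [transpose_sum, transpose_skewSingle, smul_neg, sum_neg_distrib]) fun q => ?_
  simp [Matrix.sum_apply, skewSingle_apply_ltPair]

end SkewSingle

structure IsOrthonormalSkewBasis {κ ι : Type*} [Fintype κ] [DecidableEq κ] [Fintype ι]
    [LinearOrder ι] (σ : κ → Matrix ι ι ℝ) : Prop where
  transpose_eq_neg : ∀ a, (σ a)ᵀ = -σ a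
  card_eq : Fintype.card κ = Fintype.card (LtPair ι)
  half_trace_transpose_mul : ∀ a b, (1 / 2 : ℝ) * trace ((σ a)ᵀ * σ b) = if a = b then 1 else 0

/-- The coefficients `k_abc = ∑_{i<j} ⟨σ^(a), E_ij⟩ ⟨σ^(b), E_im⟩ ⟨σ^(c), E_mj⟩` with `m = m i j`. -/
def bracketCoeff {κ ι : Type*} [Fintype ι] [LinearOrder ι] (σ : κ → Matrix ι ι ℝ)
    (m : ι → ι → ι) (a b c : κ) : ℝ :=
  ∑ p : LtPair ι, σ a p.1.1 p.1.2 * σ b p.1.1 (m p.1.1 p.1.2) * σ c (m p.1.1 p.1.2) p.1.2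

namespace IsOrthonormalSkewBasis

variable {κ ι : Type*} [Fintype κ] [DecidableEq κ] [Fintype ι] [LinearOrder ι]
  {σ : κ → Matrix ι ι ℝ}

theorem sum_mul_eq_ite (hσ : IsOrthonormalSkewBasis σ) (a b : κ) :
    ∑ p : LtPair ι, σ a p.1.1 p.1.2 * σ b p.1.1 p.1.2 = if a = b then 1 else 0 := by
  rw [← hσ.half_trace_transpose_mul,
    trace_transpose_mul_eq_two_mul_sum_ltPair (hσ.transpose_eq_neg a) (hσ.transpose_eq_neg b)]
  ring

theorem sum_apply_mul_apply_eq_ite (hσ : IsOrthonormalSkewBasis σ) (p q : LtPair ι) :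
    ∑ a, σ a p.1.1 p.1.2 * σ a q.1.1 q.1.2 = if p = q then 1 else 0 := by
  let M : Matrix κ (LtPair ι) ℝ := of fun a p => σ a p.1.1 p.1.2
  have hM : M * Mᵀ = 1 := by
    ext a b
    simpa [M, mul_apply, one_apply] using hσ.sum_mul_eq_ite a b
  have := congrFun (congrFun ((mul_eq_one_comm_of_card_eq _ _ _ hσ.card_eq).mp hM) p) q
  simpa [M, mul_apply, one_apply] using this

theorem sum_apply_smul_eq_skewSingle (hσ : IsOrthonormalSkewBasis σ) (i j : ι) :
    ∑ a, σ a i j • σ a = skewSingle i j := by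
  have hskew := hσ.transpose_eq_neg
  have hlt : ∀ p : LtPair ι, ∑ a, σ a p.1.1 p.1.2 • σ a = skewSingle p.1.1 p.1.2 := fun p =>
    ext_of_transpose_eq_neg (by simp [transpose_sum, hskew, sum_neg_distrib])
      (transpose_skewSingle _ _) fun q => by
        simp [Matrix.sum_apply, hσ.sum_apply_mul_apply_eq_ite, skewSingle_apply_ltPair]
  rcases lt_trichotomy i j with hij | rfl | hij
  · exact hlt ⟨(i, j), hij⟩
  · simp [apply_self_of_transpose_eq_neg (hskew _), skewSingle_self]
  · simp [apply_swap_of_transpose_eq_neg (hskew _) j i, skewSingle_swap j i, ← hlt ⟨(j, i), hij⟩,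
      sum_neg_distrib]

theorem abs_apply_le_one (hσ : IsOrthonormalSkewBasis σ) (a : κ) {i j : ι} (hij : i ≠ j) :
    |σ a i j| ≤ 1 := by
  have hsq : ∑ b, σ b i j ^ 2 = 1 := by
    have := congrFun (congrFun (hσ.sum_apply_smul_eq_skewSingle i j) i) j
    simpa [Matrix.sum_apply, skewSingle, single_apply, hij, hij.symm, sq] using this
  rw [← sq_le_one_iff_abs_le_one, ← hsq]
  exact single_le_sum (fun b _ => sq_nonneg (σ b i j)) (mem_univ a)

variable {m : ι → ι → ι}

theorem abs_bracketCoeff_le (hσ : IsOrthonormalSkewBasis σ) (hm : ∀ i j, m i j ≠ i ∧ m i j ≠ j)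
    (a b c : κ) : |bracketCoeff σ m a b c| ≤ Fintype.card (LtPair ι) := by
  calc |bracketCoeff σ m a b c|
      ≤ ∑ p : LtPair ι,
          |σ a p.1.1 p.1.2 * σ b p.1.1 (m p.1.1 p.1.2) * σ c (m p.1.1 p.1.2) p.1.2| :=
        abs_sum_le_sum_abs _ _
    _ ≤ ∑ _p : LtPair ι, (1 : ℝ) := sum_le_sum fun p _ => by
        rw [abs_mul, abs_mul]
        exact mul_le_one₀ (mul_le_one₀ (hσ.abs_apply_le_one a p.2.ne) (abs_nonneg _)
          (hσ.abs_apply_le_one b (hm _ _).1.symm)) (abs_nonneg _) (hσ.abs_apply_le_one c (hm _ _).2)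
    _ = Fintype.card (LtPair ι) := by simp

theorem eq_sum_sum_bracketCoeff_smul_commutator (hσ : IsOrthonormalSkewBasis σ)
    (hm : ∀ i j, m i j ≠ i ∧ m i j ≠ j) (a : κ) :
    σ a = ∑ b, ∑ c, bracketCoeff σ m a b c • (σ b * σ c - σ c * σ b) := by
  calc σ a = ∑ p : LtPair ι, σ a p.1.1 p.1.2 • skewSingle p.1.1 p.1.2 :=
        eq_sum_smul_skewSingle (hσ.transpose_eq_neg a)
    _ = ∑ p : LtPair ι, σ a p.1.1 p.1.2 • ∑ b, ∑ c,
          (σ b p.1.1 (m p.1.1 p.1.2) * σ c (m p.1.1 p.1.2) p.1.2) • (σ b * σ c - σ c * σ b) := by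
        refine sum_congr rfl fun p _ => ?_
        rw [← sum_smul_commutator_sum_smul, hσ.sum_apply_smul_eq_skewSingle,
          hσ.sum_apply_smul_eq_skewSingle, skewSingle_commutator (hm _ _).1.symm (hm _ _).2 p.2.ne]
    _ = ∑ b, ∑ c, bracketCoeff σ m a b c • (σ b * σ c - σ c * σ b) := by
        simp only [smul_sum, smul_smul, bracketCoeff, sum_smul, mul_assoc]
        rw [sum_comm]
        exact sum_congr rfl fun b _ => sum_comm

end IsOrthonormalSkewBasis

end Matrix

/-- Lemma 4.7. There is a constant `C > 0` depending only on `n`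
such that every orthonormal basis `{σ^(a)}` of `so(n)` (with respect to the inner
product `⟨A,B⟩ = ½ tr(AᵀB)`) can be written as `σ^(a) = Σ k_{abc} [σ^(b), σ^(c)]`
with `|k_{abc}| ≤ C`. -/
theorem orthonormal_basis_so_n_bracket_representation (n : ℕ) (hn : 3 ≤ n) :
    ∃ C : ℝ, 0 < C ∧
      ∀ σ : Fin (n * (n - 1) / 2) → Matrix (Fin n) (Fin n) ℝ,
        (∀ a, (σ a)ᵀ = -(σ a)) →
        (∀ a b, (1 / 2 : ℝ) * Matrix.trace ((σ a)ᵀ * σ b) = if a = b then 1 else 0) →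
        ∃ k : Fin (n * (n - 1) / 2) → Fin (n * (n - 1) / 2) → Fin (n * (n - 1) / 2) → ℝ,
          (∀ a b c, |k a b c| ≤ C) ∧
          ∀ a, σ a = ∑ b, ∑ c, k a b c • (σ b * σ c - σ c * σ b) := by
  have hcard : Fintype.card (LtPair (Fin n)) = n * (n - 1) / 2 := by
    rw [card_ltPair, Fintype.card_fin, Nat.choose_two_right]
  choose m hm using exists_ne_and_ne_of_three_le_card (ι := Fin n) (by simpa using hn)
  refine ⟨Fintype.card (LtPair (Fin n)), ?_, fun σ hskew horth => ?_⟩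
  · rw [card_ltPair, Fintype.card_fin]
    exact_mod_cast Nat.choose_pos (by omega)
  have hσ : IsOrthonormalSkewBasis σ := ⟨hskew, by simp [hcard], horth⟩
  exact ⟨bracketCoeff σ m, hσ.abs_bracketCoeff_le hm, hσ.eq_sum_sum_bracketCoeff_smul_commutator hm⟩
end

section
/- There exists an absolute constant C > 0 such that for every L ≥ 10^5, every z ∈ [−4000,4000], and every τ ∈ (0,L], the reflected heat kernel S on [−L,L] satisfies |∂S/∂w (z,τ;w)|_{w=L}| ≤ C L τ^{−3/2} e^{−L²/(100τ)} and |∂S/∂w (z,τ;w)|_{w=−L}| ≤ C L τ^{−3/2} e^{−L²/(100τ)}, where ∂S/∂w denotes the derivative of S(z,τ;·) in its third argument. -/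
/-!
By the method of images, `S(z,τ;w) = (4πτ)^{-1/2} (θ(z - w) - θ(z + w - 2L))`, where `θ` is the
`4L`-periodisation of the Gaussian `e^{-y²/(4τ)}`. For `w = ±L` both arguments lie within `4000`
of `jL` with `j ∈ {±1, -3}`, so the `k`-th image point `y + 4kL` has modulus at least
`max(1, |k|) L / 2`. There the derivative of the Gaussian is at most `e^{-x²/(8τ)}`, and since
`τ ≤ L` and `L` is large this is at most `e^{-L²/(100τ)} e^{-|k|}`. Summing over `k` (which also
justifies termwise differentiation) bounds `θ'`, and `(4πτ)^{-1/2} ≤ τ^{-1/2} ≤ L τ^{-3/2}`.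
-/

open Real Set

theorem hasDerivAt_exp_neg_sq_div (t x : ℝ) :
    HasDerivAt (fun x => exp (-x ^ 2 / (4 * t))) (-x / (2 * t) * exp (-x ^ 2 / (4 * t))) x := by
  have h : HasDerivAt (fun x => -x ^ 2 / (4 * t)) (-(2 * x) / (4 * t)) x := by
    simpa using (hasDerivAt_pow 2 x).neg.div_const (4 * t)
  exact h.exp.congr_deriv (by ring)

theorem abs_mul_exp_neg_sq_div_le {t x : ℝ} (ht : 0 < t) (hx : 4 ≤ |x|) :
    |-x / (2 * t) * exp (-x ^ 2 / (4 * t))| ≤ exp (-x ^ 2 / (8 * t)) := by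
  have hsplit : -x ^ 2 / (4 * t) = -(x ^ 2 / (8 * t)) + -x ^ 2 / (8 * t) := by ring
  have hlin : |x| / (2 * t) ≤ exp (x ^ 2 / (8 * t)) := by
    calc |x| / (2 * t) ≤ x ^ 2 / (8 * t) := by
          rw [div_le_div_iff₀ (by positivity) (by positivity), ← sq_abs]
          nlinarith [mul_le_mul_of_nonneg_right hx (by positivity : 0 ≤ |x| * (2 * t))]
      _ ≤ exp (x ^ 2 / (8 * t)) := by linarith [add_one_le_exp (x ^ 2 / (8 * t))]
  rw [abs_mul, abs_of_pos (exp_pos _), abs_div, abs_neg, abs_of_pos (by positivity : 0 < 2 * t),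
    hsplit, exp_add, ← mul_assoc, exp_neg]
  calc |x| / (2 * t) * (exp (x ^ 2 / (8 * t)))⁻¹ * exp (-x ^ 2 / (8 * t))
      ≤ exp (x ^ 2 / (8 * t)) * (exp (x ^ 2 / (8 * t)))⁻¹ * exp (-x ^ 2 / (8 * t)) := by
        gcongr
    _ = exp (-x ^ 2 / (8 * t)) := by rw [mul_inv_cancel₀ (exp_pos _).ne', one_mul]

theorem exp_neg_sq_div_le_of_le_abs {t L x n : ℝ} (ht : 0 < t) (htL : t ≤ L) (hL : 48 ≤ L)
    (hn : 1 ≤ n) (hx : n * L ≤ 2 * |x|) :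
    exp (-x ^ 2 / (8 * t)) ≤ exp (-L ^ 2 / (100 * t)) * exp (-n) := by
  have hx2 : (n * L) ^ 2 ≤ (2 * |x|) ^ 2 := pow_le_pow_left₀ (by positivity) hx 2
  have hn2 : 1 ≤ n ^ 2 := one_le_pow₀ hn
  have hnt : n * t ≤ n ^ 2 * L := by
    nlinarith [mul_le_mul_of_nonneg_left htL (by positivity : 0 ≤ n),
      mul_le_mul_of_nonneg_right (by nlinarith : n ≤ n ^ 2) (by positivity : 0 ≤ L)]
  have hnL : 800 * n ^ 2 * L ≤ 17 * n ^ 2 * L ^ 2 := by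
    nlinarith [mul_le_mul_of_nonneg_left hL (by positivity : 0 ≤ n ^ 2 * L)]
  have hL2 : L ^ 2 ≤ n ^ 2 * L ^ 2 := le_mul_of_one_le_left (sq_nonneg L) hn2
  have key : 8 * L ^ 2 + 800 * n * t ≤ 100 * x ^ 2 := by nlinarith [sq_abs x]
  rw [← exp_add, exp_le_exp, div_add' _ _ _ (by positivity),
    div_le_div_iff₀ (by positivity) (by positivity)]
  nlinarith [mul_le_mul_of_nonneg_right key ht.le]

theorem summable_exp_neg_abs_int : Summable fun k : ℤ => exp (-|(k : ℝ)|) := by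
  refine Summable.of_nat_of_neg ?_ ?_ <;> simpa using summable_exp_neg_nat

theorem one_le_abs_add_four_mul_and_abs_le {j : ℤ} (hj0 : j ≠ 0) (hj3 : |j| ≤ 3) (k : ℤ) :
    1 ≤ |j + 4 * k| ∧ |k| ≤ |j + 4 * k| := by
  rcases abs_cases j with ⟨h, _⟩ | ⟨h, _⟩ <;> rcases abs_cases k with ⟨h', _⟩ | ⟨h', _⟩ <;>
    rcases abs_cases (j + 4 * k) with ⟨h'', _⟩ | ⟨h'', _⟩ <;> omega

theorem abs_mul_le_two_mul_abs_add {m L ε : ℝ} (hm : 1 ≤ |m|) (hε : |ε| ≤ L / 2) :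
    |m| * L ≤ 2 * |ε + m * L| := by
  have hL : 0 ≤ L := by linarith [abs_nonneg ε]
  have h := abs_sub_abs_le_abs_sub (m * L) (-ε)
  rw [abs_mul, abs_of_nonneg hL, abs_neg, sub_neg_eq_add, add_comm] at h
  nlinarith

/-- Up to the factor `(4πt)^{-1/2}`, the heat kernel of the circle `ℝ / 4Lℤ`. -/
noncomputable def periodicGaussian (t L y : ℝ) : ℝ := ∑' k : ℤ, exp (-(y + 4 * k * L) ^ 2 / (4 * t))

noncomputable def reflectedHeatKernel (L z t w : ℝ) : ℝ :=
  (4 * π * t) ^ (-(1 : ℝ) / 2) *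
    (periodicGaussian t L (z - w) - periodicGaussian t L (z + w - 2 * L))

section PeriodicGaussian

variable {t L : ℝ}

theorem four_le_abs_add_and_exp_le {j : ℤ} (ht : 0 < t) (htL : t ≤ L) (hL : 48 ≤ L)
    (hj0 : j ≠ 0) (hj3 : |j| ≤ 3) {y : ℝ} (hy : |y - j * L| ≤ L / 2) (k : ℤ) :
    4 ≤ |y + 4 * k * L| ∧
      exp (-(y + 4 * k * L) ^ 2 / (8 * t)) ≤ exp (-L ^ 2 / (100 * t)) * exp (-|(k : ℝ)|) := by
  obtain ⟨hm1, hkm⟩ := one_le_abs_add_four_mul_and_abs_le hj0 hj3 k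
  have hm1' : (1 : ℝ) ≤ |((j + 4 * k : ℤ) : ℝ)| := by exact_mod_cast hm1
  have hkm' : |(k : ℝ)| ≤ |((j + 4 * k : ℤ) : ℝ)| := by exact_mod_cast hkm
  have hfar := abs_mul_le_two_mul_abs_add hm1' hy
  rw [show y - j * L + ((j + 4 * k : ℤ) : ℝ) * L = y + 4 * k * L by push_cast; ring] at hfar
  refine ⟨by nlinarith, ?_⟩
  calc exp (-(y + 4 * k * L) ^ 2 / (8 * t))
      ≤ exp (-L ^ 2 / (100 * t)) * exp (-|((j + 4 * k : ℤ) : ℝ)|) :=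
        exp_neg_sq_div_le_of_le_abs ht htL hL hm1' hfar
    _ ≤ exp (-L ^ 2 / (100 * t)) * exp (-|(k : ℝ)|) := by gcongr

theorem exists_hasDerivAt_periodicGaussian_abs_le {j : ℤ} (ht : 0 < t) (htL : t ≤ L)
    (hL : 48 ≤ L) (hj0 : j ≠ 0) (hj3 : |j| ≤ 3) {y : ℝ} (hy : |y - j * L| ≤ L / 2 - 1) :
    ∃ d, HasDerivAt (periodicGaussian t L) d y ∧
      |d| ≤ exp (-L ^ 2 / (100 * t)) * ∑' k : ℤ, exp (-|(k : ℝ)|) := by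
  set u : ℤ → ℝ := fun k => exp (-L ^ 2 / (100 * t)) * exp (-|(k : ℝ)|)
  have hu : Summable u := summable_exp_neg_abs_int.mul_left _
  have hfar : ∀ k : ℤ, ∀ x ∈ Metric.ball y 1, 4 ≤ |x + 4 * k * L| ∧
      exp (-(x + 4 * k * L) ^ 2 / (8 * t)) ≤ u k := fun k x hx =>
    four_le_abs_add_and_exp_le ht htL hL hj0 hj3 (y := x) (by
      rw [Metric.mem_ball, Real.dist_eq] at hx
      linarith [abs_sub_le x y (j * L)]) k
  have hderiv_le : ∀ k : ℤ, ∀ x ∈ Metric.ball y 1,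
      ‖-(x + 4 * k * L) / (2 * t) * exp (-(x + 4 * k * L) ^ 2 / (4 * t))‖ ≤ u k :=
    fun k x hx => (abs_mul_exp_neg_sq_div_le ht (hfar k x hx).1).trans (hfar k x hx).2
  have hsummable : Summable fun k : ℤ => exp (-(y + 4 * k * L) ^ 2 / (4 * t)) := by
    refine hu.of_nonneg_of_le (fun k => (exp_pos _).le) fun k => ?_
    refine le_trans ?_ (hfar k y (Metric.mem_ball_self one_pos)).2
    rw [exp_le_exp, neg_div, neg_div, neg_le_neg_iff]
    exact div_le_div_of_nonneg_left (sq_nonneg _) (by positivity) (by linarith)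
  refine ⟨_, hasDerivAt_tsum_of_isPreconnected hu Metric.isOpen_ball
    (convex_ball y 1).isPreconnected
    (fun k x _ => (hasDerivAt_exp_neg_sq_div t (x + 4 * k * L)).comp_add_const x (4 * k * L))
    hderiv_le (Metric.mem_ball_self one_pos) hsummable (Metric.mem_ball_self one_pos), ?_⟩
  rw [← tsum_mul_left]
  exact tsum_of_norm_bounded hu.hasSum fun k => hderiv_le k y (Metric.mem_ball_self one_pos)

end PeriodicGaussian

theorem rpow_neg_one_half_le_mul_rpow {t L : ℝ} (ht : 0 < t) (htL : t ≤ L) :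
    t ^ (-(1 : ℝ) / 2) ≤ L * t ^ (-(3 : ℝ) / 2) := by
  rw [show -(1 : ℝ) / 2 = 1 + -(3 : ℝ) / 2 by norm_num, rpow_add ht, rpow_one]
  gcongr

theorem abs_deriv_reflectedHeatKernel_le {t L z w₀ B : ℝ} (ht : 0 < t)
    (h₁ : ∃ d, HasDerivAt (periodicGaussian t L) d (z - w₀) ∧ |d| ≤ B)
    (h₂ : ∃ d, HasDerivAt (periodicGaussian t L) d (z + w₀ - 2 * L) ∧ |d| ≤ B) :
    |deriv (reflectedHeatKernel L z t) w₀| ≤ 2 * t ^ (-(1 : ℝ) / 2) * B := by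
  obtain ⟨d₁, hd₁, hB₁⟩ := h₁
  obtain ⟨d₂, hd₂, hB₂⟩ := h₂
  have hd : HasDerivAt (reflectedHeatKernel L z t)
      ((4 * π * t) ^ (-(1 : ℝ) / 2) * (-d₁ - d₂ * 1)) w₀ :=
    ((hd₁.comp_const_sub z w₀).sub
      (hd₂.comp w₀ (((hasDerivAt_id' w₀).const_add z).sub_const (2 * L)))).const_mul _
  have hc : (4 * π * t) ^ (-(1 : ℝ) / 2) ≤ t ^ (-(1 : ℝ) / 2) :=
    rpow_le_rpow_of_nonpos ht (by nlinarith [pi_gt_three]) (by norm_num)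
  have hd₁₂ : |-d₁ - d₂| ≤ 2 * B := by
    calc |-d₁ - d₂| ≤ |-d₁| + |d₂| := abs_sub _ _
      _ ≤ 2 * B := by rw [abs_neg]; linarith
  rw [hd.deriv, abs_mul, abs_of_pos (by positivity), mul_one]
  calc (4 * π * t) ^ (-(1 : ℝ) / 2) * |-d₁ - d₂| ≤ t ^ (-(1 : ℝ) / 2) * (2 * B) := by gcongr
    _ = 2 * t ^ (-(1 : ℝ) / 2) * B := by ring

/-- There is an absolute constant `C > 0` such that for `L ≥ 10^5`,
`z ∈ [−4000,4000]` and `τ ∈ (0,L]`, the derivative in the third argument of the reflected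
heat kernel on `[−L,L]` satisfies `|∂S/∂w(z,τ;±L)| ≤ C L τ^{−3/2} e^{−L²/(100τ)}`. -/
theorem reflected_heat_kernel_normal_derivative_bound :
    ∃ C : ℝ, 0 < C ∧
      ∀ L : ℝ, (10 ^ 5 : ℝ) ≤ L →
      ∀ S : ℝ → ℝ → ℝ → ℝ,
        (∀ z t w : ℝ, S z t w = (4 * Real.pi * t) ^ (-(1 : ℝ) / 2) *
          ((∑' k : ℤ, Real.exp (-(z - w + 4 * (k : ℝ) * L) ^ 2 / (4 * t))) -
           (∑' k : ℤ, Real.exp (-(z + w + 4 * (k : ℝ) * L - 2 * L) ^ 2 / (4 * t))))) →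
        ∀ z ∈ Set.Icc (-4000 : ℝ) 4000, ∀ τ : ℝ, 0 < τ → τ ≤ L →
          |deriv (fun w => S z τ w) L|
              ≤ C * L * τ ^ (-(3 : ℝ) / 2) * Real.exp (-L ^ 2 / (100 * τ)) ∧
          |deriv (fun w => S z τ w) (-L)|
              ≤ C * L * τ ^ (-(3 : ℝ) / 2) * Real.exp (-L ^ 2 / (100 * τ)) := by
  set K := ∑' k : ℤ, exp (-|(k : ℝ)|)
  have hK : 0 < K := summable_exp_neg_abs_int.tsum_pos (fun _ => (exp_pos _).le) 0 (exp_pos _)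
  refine ⟨2 * K, by positivity, fun L hL S hS z hz τ hτ hτL => ?_⟩
  have hS' : (fun w => S z τ w) = reflectedHeatKernel L z τ := by
    ext w
    rw [hS, reflectedHeatKernel, periodicGaussian, periodicGaussian]
    congr 2
    exact tsum_congr fun k => by ring_nf
  have hderiv : ∀ j : ℤ, j ≠ 0 → |j| ≤ 3 → ∀ y, y - j * L = z → ∃ d,
      HasDerivAt (periodicGaussian τ L) d y ∧ |d| ≤ exp (-L ^ 2 / (100 * τ)) * K :=
    fun j hj0 hj3 y hy => exists_hasDerivAt_periodicGaussian_abs_le hτ hτL (by linarith) hj0 hj3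
      (by rw [hy, abs_le]; constructor <;> linarith [hz.1, hz.2])
  have hfinal : 2 * τ ^ (-(1 : ℝ) / 2) * (exp (-L ^ 2 / (100 * τ)) * K)
      ≤ 2 * K * L * τ ^ (-(3 : ℝ) / 2) * exp (-L ^ 2 / (100 * τ)) := by
    calc 2 * τ ^ (-(1 : ℝ) / 2) * (exp (-L ^ 2 / (100 * τ)) * K)
        ≤ 2 * (L * τ ^ (-(3 : ℝ) / 2)) * (exp (-L ^ 2 / (100 * τ)) * K) := by
          gcongr; exact rpow_neg_one_half_le_mul_rpow hτ hτL
      _ = 2 * K * L * τ ^ (-(3 : ℝ) / 2) * exp (-L ^ 2 / (100 * τ)) := by ring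
  rw [hS']
  exact ⟨(abs_deriv_reflectedHeatKernel_le hτ (hderiv (-1) (by norm_num) (by norm_num) _
      (by push_cast; ring)) (hderiv (-1) (by norm_num) (by norm_num) _ (by push_cast; ring))).trans
      hfinal,
    (abs_deriv_reflectedHeatKernel_le hτ (hderiv 1 (by norm_num) (by norm_num) _
      (by push_cast; ring)) (hderiv (-3) (by norm_num) (by norm_num) _ (by push_cast; ring))).trans
      hfinal⟩
end

section
/- For every ν₀ > 0 there exist constants C > 0 and L₀ ≥ 4000 with the following property. For all ν ≥ ν₀, all L ≥ L₀, and all t ∈ [−1000, 0): ∫_{−L/4}^{t} e^{−L²/(200(t−s))} (s/t)^{−ν−1} ds ≤ C ( e^{−L/100} (1 + ν^{−1/2})^{−ν} + e^{−L²√ν/(200(−t))} ). -/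
open Real Set

private lemma aux_quarter_le_exp (L : ℝ) (hL : 4000 ≤ L) : L / 4 ≤ Real.exp (L / 100) := by
  have h := Real.add_one_le_exp (L / 300)
  have h3 : Real.exp (L / 100) = Real.exp (L / 300) * Real.exp (L / 300) * Real.exp (L / 300) := by
    rw [← Real.exp_add, ← Real.exp_add]; ring_nf
  nlinarith [Real.exp_pos (L / 300), sq_nonneg (L / 300 - 40)]

set_option maxHeartbeats 1000000 in
/-- The key integral estimate from Step 1 of the proof of
Proposition 3.1: for every `ν₀ > 0` there are `C > 0` and `L₀ ≥ 4000` such that for all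
`ν ≥ ν₀`, `L ≥ L₀` and `t ∈ [−1000, 0)`,
`∫_{−L/4}^{t} e^{−L²/(200(t−s))} (s/t)^{−ν−1} ds
  ≤ C (e^{−L/100}(1+ν^{−1/2})^{−ν} + e^{−L²√ν/(200(−t))})`. -/
theorem key_integral_estimate (ν₀ : ℝ) (hν₀ : 0 < ν₀) :
    ∃ C L₀ : ℝ, 0 < C ∧ (4000 : ℝ) ≤ L₀ ∧
      ∀ ν L t : ℝ, ν₀ ≤ ν → L₀ ≤ L → t ∈ Set.Ico (-1000 : ℝ) 0 →
        (∫ s in (-(L / 4))..t, Real.exp (-L ^ 2 / (200 * (t - s))) * (s / t) ^ (-ν - 1))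
          ≤ C * (Real.exp (-L / 100) * (1 + ν ^ (-(1 : ℝ) / 2)) ^ (-ν)
              + Real.exp (-L ^ 2 * Real.sqrt ν / (200 * (-t)))) := by
  refine ⟨1 + 1000 / Real.sqrt ν₀, 4000, by positivity, le_rfl, ?_⟩
  intro ν L t hν hL ht
  obtain ⟨ht1, ht0⟩ := ht
  have hν0 : 0 < ν := lt_of_lt_of_le hν₀ hν
  have hL0 : (0 : ℝ) < L := by linarith
  have hsν : 0 < Real.sqrt ν := Real.sqrt_pos.2 hν0
  have hsν₀ : 0 < Real.sqrt ν₀ := Real.sqrt_pos.2 hν₀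
  set ε : ℝ := ν ^ (-(1 : ℝ) / 2) with hεdef
  have hε : ε = (Real.sqrt ν)⁻¹ := by
    rw [hεdef, Real.sqrt_eq_rpow, ← Real.rpow_neg hν0.le]
    norm_num
  have hε0 : 0 < ε := by rw [hε]; positivity
  have hεsν : ε * Real.sqrt ν = 1 := by rw [hε]; field_simp
  have hεt : ε * t < 0 := mul_neg_of_pos_of_neg hε0 ht0
  have hεb : ε ≤ 1 / Real.sqrt ν₀ := by
    rw [hε, one_div]
    exact inv_anti₀ hsν₀ (Real.sqrt_le_sqrt hν)
  have hat : -(L / 4) ≤ t := by linarith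
  set a : ℝ := -(L / 4) with hadef
  set f : ℝ → ℝ := fun s => Real.exp (-L ^ 2 / (200 * (t - s))) * (s / t) ^ (-ν - 1)
    with hfdef
  -- basic pointwise facts on `Icc a t`
  have hdivge : ∀ s, s ≤ t → 1 ≤ s / t := by
    intro s hs
    rw [le_div_iff_of_neg ht0]
    linarith
  have hf_nonneg : ∀ s ∈ Set.Icc a t, 0 ≤ f s := by
    intro s hs
    exact mul_nonneg (Real.exp_pos _).le
      (Real.rpow_nonneg (by linarith [hdivge s hs.2]) _)
  have hf_le_one : ∀ s ∈ Set.Icc a t, f s ≤ 1 := by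
    intro s hs
    have h1 : Real.exp (-L ^ 2 / (200 * (t - s))) ≤ 1 := by
      apply Real.exp_le_one_iff.2
      rw [neg_div]
      exact neg_nonpos.2 (div_nonneg (by positivity) (by linarith [hs.2]))
    have h2 : (s / t) ^ (-ν - 1) ≤ 1 :=
      Real.rpow_le_one_of_one_le_of_nonpos (hdivge s hs.2) (by linarith)
    have h0 : (0:ℝ) ≤ (s / t) ^ (-ν - 1) := Real.rpow_nonneg (by linarith [hdivge s hs.2]) _
    simp only [hfdef]
    nlinarith [h1, h2, h0]
  -- measurability and integrability
  have hmf : Measurable f := by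
    rw [hfdef]; fun_prop
  have hInt : MeasureTheory.IntegrableOn f (Set.Icc a t) := by
    apply MeasureTheory.Measure.integrableOn_of_bounded (M := 1)
    · exact (measure_Icc_lt_top).ne
    · exact hmf.aestronglyMeasurable
    · filter_upwards [MeasureTheory.ae_restrict_mem measurableSet_Icc] with s hs
      rw [Real.norm_eq_abs, abs_of_nonneg (hf_nonneg s hs)]
      exact hf_le_one s hs
  have hii : ∀ x y : ℝ, a ≤ x → y ≤ t → x ≤ y → IntervalIntegrable f MeasureTheory.volume x y := by
    intro x y hx hy hxy
    refine (hInt.mono_set ?_).intervalIntegrable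
    rw [Set.uIcc_of_le hxy]
    exact Set.Icc_subset_Icc hx hy
  -- abbreviations for the two terms on the right
  set A : ℝ := Real.exp (-L / 100) * (1 + ε) ^ (-ν) with hAdef
  set B : ℝ := Real.exp (-L ^ 2 * Real.sqrt ν / (200 * (-t))) with hBdef
  have hA0 : 0 ≤ A := mul_nonneg (Real.exp_pos _).le (Real.rpow_nonneg (by linarith) _)
  have hB0 : 0 ≤ B := (Real.exp_pos _).le
  have hQ0 : 0 ≤ 1000 / Real.sqrt ν₀ := by positivity
  -- tail pointwise bound
  have htail : ∀ s, (1 + ε) * t ≤ s → s ≤ t → s ≠ t → f s ≤ B := by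
    intro s hms hst hsne
    have hst' : s < t := lt_of_le_of_ne hst hsne
    have hts0 : 0 < t - s := by linarith
    have htsε : t - s ≤ ε * (-t) := by linarith
    have hkey : L ^ 2 * Real.sqrt ν / (200 * (-t)) ≤ L ^ 2 / (200 * (t - s)) := by
      rw [div_le_div_iff₀ (by linarith) (by linarith)]
      have h1 : Real.sqrt ν * (t - s) ≤ -t := by
        have h := mul_le_mul_of_nonneg_left htsε hsν.le
        have h2 : Real.sqrt ν * (ε * (-t)) = -t := by
          rw [show Real.sqrt ν * (ε * (-t)) = ε * Real.sqrt ν * (-t) by ring, hεsν, one_mul]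
        linarith
      have h3 := mul_le_mul_of_nonneg_left h1 (by positivity : (0:ℝ) ≤ 200 * L ^ 2)
      nlinarith [h3]
    have hexp : Real.exp (-L ^ 2 / (200 * (t - s))) ≤ B := by
      rw [hBdef]
      apply Real.exp_le_exp.2
      rw [neg_div, neg_mul, neg_div]
      exact neg_le_neg hkey
    calc f s ≤ Real.exp (-L ^ 2 / (200 * (t - s))) :=
          mul_le_of_le_one_right (Real.exp_pos _).le
            (Real.rpow_le_one_of_one_le_of_nonpos (hdivge s hst) (by linarith))
      _ ≤ B := hexp
  -- head pointwise bound
  have hhead : ∀ s, a ≤ s → s ≤ (1 + ε) * t →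
      f s ≤ Real.exp (-L / 50) * (1 + ε) ^ (-ν) := by
    intro s hs hsm
    have hst : s < t := by linarith
    have hts0 : 0 < t - s := by linarith
    have htsL : t - s ≤ L / 4 := by
      have : a ≤ s := hs
      rw [hadef] at this
      linarith
    have hkey : L / 50 ≤ L ^ 2 / (200 * (t - s)) := by
      rw [div_le_div_iff₀ (by norm_num) (by linarith)]
      nlinarith [mul_le_mul_of_nonneg_left htsL hL0.le]
    have hexp : Real.exp (-L ^ 2 / (200 * (t - s))) ≤ Real.exp (-L / 50) := by
      apply Real.exp_le_exp.2
      rw [neg_div, neg_div]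
      exact neg_le_neg hkey
    have hdiv : 1 + ε ≤ s / t := by
      rw [le_div_iff_of_neg ht0]
      linarith
    have hr : (s / t) ^ (-ν - 1) ≤ (1 + ε) ^ (-ν) := by
      calc (s / t) ^ (-ν - 1) ≤ (1 + ε) ^ (-ν - 1) :=
            Real.rpow_le_rpow_of_nonpos (by linarith) hdiv (by linarith)
        _ ≤ (1 + ε) ^ (-ν) :=
            Real.rpow_le_rpow_of_exponent_le (by linarith) (by linarith)
    exact mul_le_mul hexp hr (Real.rpow_nonneg (by linarith [hdivge s hst.le]) _)
      (Real.exp_pos _).le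
  -- a.e. the variable differs from t
  have hne_t : ∀ᵐ s : ℝ, s ≠ t := by
    have hset : {s : ℝ | ¬ s ≠ t} = {t} := by ext x; simp
    rw [MeasureTheory.ae_iff, hset]
    exact Real.volume_singleton
  clear_value ε a f A B
  -- we must show the goal with `f`, `A`, `B` folded
  show (∫ s in a..t, f s) ≤ (1 + 1000 / Real.sqrt ν₀) * (A + B)
  by_cases hc : (1 + ε) * t ≤ a
  · -- whole interval is in the tail region
    have hbnd : f ≤ᵐ[MeasureTheory.volume.restrict (Set.Icc a t)] fun _ => B := by
      filter_upwards [MeasureTheory.ae_restrict_mem measurableSet_Icc,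
        MeasureTheory.ae_restrict_of_ae hne_t] with s hs hsne
      exact htail s (le_trans hc hs.1) hs.2 hsne
    have h1 : (∫ s in a..t, f s) ≤ ∫ _ in a..t, B :=
      intervalIntegral.integral_mono_ae_restrict hat (hii a t le_rfl le_rfl hat)
        intervalIntegrable_const hbnd
    have h2 : (∫ _ in a..t, B) = (t - a) * B := by
      rw [intervalIntegral.integral_const]; simp [smul_eq_mul]
    have hlen : t - a ≤ 1000 / Real.sqrt ν₀ := by
      have h3 : t - a ≤ ε * (-t) := by linarith
      have h4 : ε * (-t) ≤ ε * 1000 :=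
        mul_le_mul_of_nonneg_left (by linarith) hε0.le
      have h5 : ε * 1000 ≤ (1 / Real.sqrt ν₀) * 1000 :=
        mul_le_mul_of_nonneg_right hεb (by norm_num)
      have h6 : (1 / Real.sqrt ν₀) * 1000 = 1000 / Real.sqrt ν₀ := by ring
      linarith
    calc (∫ s in a..t, f s) ≤ (t - a) * B := by rw [← h2]; exact h1
      _ ≤ (1000 / Real.sqrt ν₀) * B := mul_le_mul_of_nonneg_right hlen hB0
      _ ≤ (1 + 1000 / Real.sqrt ν₀) * (A + B) := by
          nlinarith [mul_nonneg hQ0 hA0, hA0, hB0]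
  · -- split the integral at m = (1+ε)t
    push_neg at hc
    set m : ℝ := (1 + ε) * t with hmdef
    clear_value m
    have ham : a ≤ m := hc.le
    have hmt : m ≤ t := by rw [hmdef]; linarith
    have hsplit : (∫ s in a..t, f s) = (∫ s in a..m, f s) + ∫ s in m..t, f s :=
      (intervalIntegral.integral_add_adjacent_intervals (hii a m le_rfl hmt ham)
        (hii m t ham le_rfl hmt)).symm
    -- head piece
    have hI1 : (∫ s in a..m, f s) ≤ A := by
      have h1 : (∫ s in a..m, f s) ≤ ∫ _ in a..m, Real.exp (-L / 50) * (1 + ε) ^ (-ν) := by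
        apply intervalIntegral.integral_mono_on ham (hii a m le_rfl hmt ham)
          intervalIntegrable_const
        intro s hs
        exact hhead s hs.1 hs.2
      have h2 : (∫ _ in a..m, Real.exp (-L / 50) * (1 + ε) ^ (-ν))
          = (m - a) * (Real.exp (-L / 50) * (1 + ε) ^ (-ν)) := by
        rw [intervalIntegral.integral_const]; simp [smul_eq_mul]
      have hma : m - a ≤ L / 4 := by
        have ha' : a = -(L/4) := hadef
        have hm' : m = (1 + ε) * t := hmdef
        nlinarith [hεt]
      have hexp4 : L / 4 * Real.exp (-L / 50) ≤ Real.exp (-L / 100) := by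
        have ha1 : L / 4 ≤ Real.exp (L / 100) := aux_quarter_le_exp L hL
        have ha2 : Real.exp (L / 100) * Real.exp (-L / 50) = Real.exp (-L / 100) := by
          rw [← Real.exp_add]; ring_nf
        nlinarith [Real.exp_pos (-L / 50)]
      have hrnn : (0:ℝ) ≤ (1 + ε) ^ (-ν) := Real.rpow_nonneg (by linarith) _
      calc (∫ s in a..m, f s) ≤ (m - a) * (Real.exp (-L / 50) * (1 + ε) ^ (-ν)) := by
            rw [← h2]; exact h1
        _ ≤ (L / 4) * (Real.exp (-L / 50) * (1 + ε) ^ (-ν)) := by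
            apply mul_le_mul_of_nonneg_right hma
            exact mul_nonneg (Real.exp_pos _).le hrnn
        _ = (L / 4 * Real.exp (-L / 50)) * (1 + ε) ^ (-ν) := by ring
        _ ≤ Real.exp (-L / 100) * (1 + ε) ^ (-ν) := mul_le_mul_of_nonneg_right hexp4 hrnn
        _ = A := hAdef.symm
    -- tail piece
    have hI2 : (∫ s in m..t, f s) ≤ (1000 / Real.sqrt ν₀) * B := by
      have hbnd : f ≤ᵐ[MeasureTheory.volume.restrict (Set.Icc m t)] fun _ => B := by
        filter_upwards [MeasureTheory.ae_restrict_mem measurableSet_Icc,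
          MeasureTheory.ae_restrict_of_ae hne_t] with s hs hsne
        exact htail s hs.1 hs.2 hsne
      have h1 : (∫ s in m..t, f s) ≤ ∫ _ in m..t, B :=
        intervalIntegral.integral_mono_ae_restrict hmt (hii m t ham le_rfl hmt)
          intervalIntegrable_const hbnd
      have h2 : (∫ _ in m..t, B) = (t - m) * B := by
        rw [intervalIntegral.integral_const]; simp [smul_eq_mul]
      have hlen : t - m ≤ 1000 / Real.sqrt ν₀ := by
        have h3 : t - m = ε * (-t) := by rw [hmdef]; ring
        have h4 : ε * (-t) ≤ ε * 1000 :=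
          mul_le_mul_of_nonneg_left (by linarith) hε0.le
        have h5 : ε * 1000 ≤ (1 / Real.sqrt ν₀) * 1000 :=
          mul_le_mul_of_nonneg_right hεb (by norm_num)
        have h6 : (1 / Real.sqrt ν₀) * 1000 = 1000 / Real.sqrt ν₀ := by ring
        linarith
      calc (∫ s in m..t, f s) ≤ (t - m) * B := by rw [← h2]; exact h1
        _ ≤ (1000 / Real.sqrt ν₀) * B := mul_le_mul_of_nonneg_right hlen hB0
    calc (∫ s in a..t, f s) = (∫ s in a..m, f s) + ∫ s in m..t, f s := hsplit
      _ ≤ A + (1000 / Real.sqrt ν₀) * B := add_le_add hI1 hI2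
      _ ≤ (1 + 1000 / Real.sqrt ν₀) * (A + B) := by
          nlinarith [mul_nonneg hQ0 hA0, mul_nonneg hQ0 hB0, hA0, hB0]
end

section
/- For every ν₀ > 0 there exist constants C > 0 and L₀ ≥ 10^5 with the following property. Let ν ≥ ν₀, L ≥ L₀, and t₀ ∈ [−1000, 0). Let u be continuous on the rectangle [−L/4, L/4] × [−L/4, t₀] and satisfy the one-dimensional heat equation ∂u/∂t = ∂²u/∂z² in its interior (with u smooth there). Assume |u(z, −L/4)| ≤ (L/4)^{−ν} for all z ∈ [−L/4, L/4], and |u(−L/4, s)| ≤ L^{20}(−s)^{−ν−1} and |u(L/4, s)| ≤ L^{20}(−s)^{−ν−1} for all s ∈ [−L/4, t₀]. Then for every (z,t) ∈ [−1000,1000] × [−1000, t₀]: |u(z,t)| ≤ C (L/4)^{−ν} + C L^{20} (−t)^{−ν−1} ( e^{−L/100} (1 + ν^{−1/2})^{−ν} + e^{−L²√ν/(200(−t))} ). -/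
open Real Set

section HeatAux
open Filter Topology

/-- Second derivative at an interior local minimum is nonnegative. -/
lemma second_deriv_nonneg_of_isLocalMin {f : ℝ → ℝ} {z : ℝ}
    (hmin : IsLocalMin f z)
    (hd : ∀ᶠ x in 𝓝 z, DifferentiableAt ℝ f x)
    (hd2 : DifferentiableAt ℝ (deriv f) z) :
    0 ≤ deriv (deriv f) z := by
  by_contra hneg
  push_neg at hneg
  have h0 : deriv f z = 0 := hmin.deriv_eq_zero
  have hslope : Tendsto (slope (deriv f) z) (𝓝[≠] z) (𝓝 (deriv (deriv f) z)) :=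
    hasDerivAt_iff_tendsto_slope.1 hd2.hasDerivAt
  have hneg' : ∀ᶠ x in 𝓝[>] z, deriv f x < 0 := by
    have h1 : ∀ᶠ x in 𝓝[>] z, slope (deriv f) z x < 0 :=
      (hslope.eventually_lt_const hneg).filter_mono
        (nhdsWithin_mono z (fun x hx => ne_of_gt hx))
    filter_upwards [h1, self_mem_nhdsWithin] with x hx hxz
    have : slope (deriv f) z x = deriv f x / (x - z) := by
      rw [slope_def_field, h0]; ring
    rw [this] at hx
    have hxz' : (0:ℝ) < x - z := sub_pos.2 hxz
    by_contra hge
    push_neg at hge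
    exact absurd hx (not_lt.2 (div_nonneg hge hxz'.le))
  -- extract intervals
  obtain ⟨ε, hε, hball⟩ := Metric.eventually_nhds_iff.1 (hmin.and hd)
  obtain ⟨b, hb, hIoc⟩ := mem_nhdsGT_iff_exists_Ioc_subset.1 hneg'
  set c := min b (z + ε / 2) with hc
  have hzc : z < c := lt_min hb (by linarith)
  have hmem : ∀ x ∈ Icc z c, f z ≤ f x ∧ DifferentiableAt ℝ f x := by
    intro x hx
    rcases eq_or_lt_of_le hx.1 with rfl | hlt
    · exact ⟨le_rfl, (hball (by simpa using hε)).2⟩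
    · have : dist x z < ε := by
        rw [Real.dist_eq, abs_of_pos (sub_pos.2 hlt)]
        have := hx.2
        have : x ≤ z + ε / 2 := le_trans this (min_le_right _ _)
        linarith
      exact hball this
  have hanti : StrictAntiOn f (Icc z c) := by
    apply strictAntiOn_of_deriv_neg (convex_Icc _ _)
    · exact fun x hx => ((hmem x hx).2).continuousAt.continuousWithinAt
    · intro x hx
      rw [interior_Icc] at hx
      exact hIoc ⟨hx.1, le_trans hx.2.le (min_le_left _ _)⟩
  have h1 : f c < f z := hanti (left_mem_Icc.2 hzc.le) (right_mem_Icc.2 hzc.le) hzc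
  have h2 : f z ≤ f c := (hmem c (right_mem_Icc.2 hzc.le)).1
  linarith

/-- At a right-endpoint minimum, the derivative is nonpositive. -/
lemma deriv_nonpos_of_right_min {f : ℝ → ℝ} {s0 t : ℝ} (hs : s0 < t)
    (hmin : ∀ x ∈ Ico s0 t, f t ≤ f x) (hd : DifferentiableAt ℝ f t) :
    deriv f t ≤ 0 := by
  have hslope : Tendsto (slope f t) (𝓝[≠] t) (𝓝 (deriv f t)) :=
    hasDerivAt_iff_tendsto_slope.1 hd.hasDerivAt
  have hslope' : Tendsto (slope f t) (𝓝[<] t) (𝓝 (deriv f t)) :=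
    hslope.mono_left (nhdsWithin_mono t (fun x hx => ne_of_lt hx))
  refine le_of_tendsto hslope' ?_
  have hIoo : Ioo s0 t ∈ 𝓝[<] t := Ioo_mem_nhdsLT_of_mem ⟨hs, le_rfl⟩
  filter_upwards [hIoo] with x hx
  have h1 : f t ≤ f x := hmin x ⟨hx.1.le, hx.2⟩
  have h2 : x - t < 0 := sub_neg.2 hx.2
  rw [slope_def_field]
  exact div_nonpos_of_nonneg_of_nonpos (by linarith) h2.le


/-- Weak parabolic maximum principle for strict supersolutions on a rectangle. -/
lemma heat_max_principle {a b s0 s1 : ℝ} (hab : a < b) (hs : s0 < s1)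
    {φ : ℝ → ℝ → ℝ}
    (hcont : ContinuousOn (fun p : ℝ × ℝ => φ p.1 p.2) (Icc a b ×ˢ Icc s0 s1))
    (hint : ∀ z ∈ Ioo a b, ∀ t ∈ Ioo s0 s1,
      DifferentiableAt ℝ (fun t' => φ z t') t ∧
      (∀ᶠ x in 𝓝 z, DifferentiableAt ℝ (fun z' => φ z' t) x) ∧
      DifferentiableAt ℝ (deriv (fun z' => φ z' t)) z ∧
      deriv (deriv (fun z' => φ z' t)) z < deriv (fun t' => φ z t') t)
    (hbd : ∀ s ∈ Icc s0 s1, 0 ≤ φ a s ∧ 0 ≤ φ b s)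
    (hinit : ∀ z ∈ Icc a b, 0 ≤ φ z s0) :
    ∀ z ∈ Icc a b, ∀ t ∈ Icc s0 s1, 0 ≤ φ z t := by
  have key : ∀ t1 ∈ Ioo s0 s1, ∀ z ∈ Icc a b, ∀ t ∈ Icc s0 t1, 0 ≤ φ z t := by
    intro t1 ht1
    by_contra hcon
    push_neg at hcon
    obtain ⟨z1, hz1, t2, ht2, hneg⟩ := hcon
    set R : Set (ℝ × ℝ) := Icc a b ×ˢ Icc s0 t1 with hR
    have hRcp : IsCompact R := isCompact_Icc.prod isCompact_Icc
    have hRne : R.Nonempty := ⟨(z1, t2), ⟨hz1, ht2⟩⟩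
    have hsub : R ⊆ Icc a b ×ˢ Icc s0 s1 := by
      apply Set.prod_mono_right
      exact Icc_subset_Icc le_rfl ht1.2.le
    have hconR : ContinuousOn (fun p : ℝ × ℝ => φ p.1 p.2) R := hcont.mono hsub
    obtain ⟨p, hpR, hpmin⟩ := hRcp.exists_isMinOn hRne hconR
    obtain ⟨zs, ts⟩ := p
    have hpR' : zs ∈ Icc a b ∧ ts ∈ Icc s0 t1 := hpR
    have hval : φ zs ts < 0 := lt_of_le_of_lt (hpmin (show (z1,t2) ∈ R from ⟨hz1, ht2⟩) : φ zs ts ≤ φ z1 t2) hneg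
    have hzs : zs ∈ Ioo a b := by
      rcases eq_or_lt_of_le hpR'.1.1 with h | h
      · exact absurd hval (not_lt.2 (by rw [← h]; exact (hbd ts ⟨hpR'.2.1, hpR'.2.2.trans ht1.2.le⟩).1))
      rcases eq_or_lt_of_le hpR'.1.2 with h' | h'
      · exact absurd hval (not_lt.2 (by rw [h']; exact (hbd ts ⟨hpR'.2.1, hpR'.2.2.trans ht1.2.le⟩).2))
      exact ⟨h, h'⟩
    have hts : ts ∈ Ioo s0 s1 := by
      rcases eq_or_lt_of_le hpR'.2.1 with h | h
      · exact absurd hval (not_lt.2 (by rw [← h]; exact hinit zs hpR'.1))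
      exact ⟨h, lt_of_le_of_lt hpR'.2.2 ht1.2⟩
    obtain ⟨hdt, hdz, hdz2, hlt⟩ := hint zs hzs ts hts
    have hminT : ∀ x ∈ Ico s0 ts, φ zs ts ≤ φ zs x := by
      intro x hx
      exact (hpmin (show (zs, x) ∈ R from ⟨hpR'.1, ⟨hx.1, hx.2.le.trans hpR'.2.2⟩⟩) : φ zs ts ≤ φ zs x)
    have h1 : deriv (fun t' => φ zs t') ts ≤ 0 :=
      deriv_nonpos_of_right_min hts.1 hminT hdt
    have hlocmin : IsLocalMin (fun z' => φ z' ts) zs := by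
      have hmem : Ioo a b ∈ 𝓝 zs := Ioo_mem_nhds hzs.1 hzs.2
      refine Filter.eventually_of_mem hmem ?_
      intro x hx
      exact (hpmin (show (x, ts) ∈ R from ⟨⟨hx.1.le, hx.2.le⟩, hpR'.2⟩) : φ zs ts ≤ φ x ts)
    have h2 : 0 ≤ deriv (deriv (fun z' => φ z' ts)) zs :=
      second_deriv_nonneg_of_isLocalMin hlocmin hdz hdz2
    linarith
  have hIco : ∀ z ∈ Icc a b, ∀ t ∈ Ico s0 s1, 0 ≤ φ z t := by
    intro z hz t ht
    rcases eq_or_lt_of_le ht.1 with h | h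
    · rw [← h]; exact hinit z hz
    · exact key t ⟨h, ht.2⟩ z hz t ⟨ht.1, le_rfl⟩
  intro z hz t ht
  rcases eq_or_lt_of_le ht.2 with h | h
  · -- t = s1 : continuity
    subst h
    have hsec : ContinuousOn (fun s => φ z s) (Icc s0 t) := by
      have : (fun s => φ z s) = (fun p : ℝ × ℝ => φ p.1 p.2) ∘ (fun s => (z, s)) := rfl
      rw [this]
      exact hcont.comp (Continuous.continuousOn (by continuity)) (fun s hsmem => ⟨hz, hsmem⟩)
    have hcw : ContinuousWithinAt (fun s => φ z s) (Ico s0 t) t :=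
      (hsec t ht).mono Ico_subset_Icc_self
    have hne : (𝓝[Ico s0 t] t).NeBot := by
      rw [← mem_closure_iff_nhdsWithin_neBot, closure_Ico (ne_of_lt hs), ]
      exact ⟨hs.le, le_rfl⟩
    refine ge_of_tendsto hcw.tendsto ?_
    filter_upwards [self_mem_nhdsWithin] with x hx
    exact hIco z hz x hx
  · exact hIco z hz t ⟨ht.1, h⟩


/-- One-sided barrier estimate. -/
lemma barrier_one_sided {ν L t₀ κ β : ℝ} (hν : 0 < ν) (hL : (10:ℝ)^5 ≤ L)
    (ht₀ : t₀ ∈ Set.Ico (-1000 : ℝ) 0)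
    (hκ : 0 < κ) (hβ : 0 ≤ β)
    (hsup : ∀ t ∈ Set.Ioo (-(L/4)) t₀, 0 < (ν + 1) + (β - κ^2) * (-t))
    (v : ℝ → ℝ → ℝ)
    (hcont : ContinuousOn (fun p : ℝ × ℝ => v p.1 p.2)
      (Set.Icc (-(L / 4)) (L / 4) ×ˢ Set.Icc (-(L / 4)) t₀))
    (hsm : ContDiffOn ℝ (⊤ : ℕ∞) (fun p : ℝ × ℝ => v p.1 p.2)
      (Set.Ioo (-(L / 4)) (L / 4) ×ˢ Set.Ioo (-(L / 4)) t₀))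
    (hpde : ∀ z t : ℝ, z ∈ Set.Ioo (-(L / 4)) (L / 4) → t ∈ Set.Ioo (-(L / 4)) t₀ →
      deriv (fun t' => v z t') t = deriv (deriv (fun z' => v z' t)) z)
    (hiv : ∀ z ∈ Set.Icc (-(L / 4)) (L / 4), v z (-(L / 4)) ≤ (L / 4) ^ (-ν))
    (hbv : ∀ s ∈ Set.Icc (-(L / 4)) t₀,
      v (-(L / 4)) s ≤ L ^ 20 * (-s) ^ (-ν - 1) ∧ v (L / 4) s ≤ L ^ 20 * (-s) ^ (-ν - 1)) :
    ∀ z ∈ Set.Icc (-(L/4)) (L/4), ∀ t ∈ Set.Icc (-(L/4)) t₀,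
      v z t ≤ (L/4) ^ (-ν) + (L^20 * Real.exp (-(κ*(L/4)))) *
        (((-t) ^ (-ν-1) * Real.exp (β*(t+L/4))) * (Real.exp (κ*z) + Real.exp (-(κ*z)))) := by
  have hL0 : (0:ℝ) < L := by nlinarith
  have hL4 : (0:ℝ) < L/4 := by linarith
  have hab : -(L/4) < L/4 := by linarith
  have hbig : (25000:ℝ) ≤ L/4 := by nlinarith
  have hs : -(L/4) < t₀ := by
    have := ht₀.1; linarith
  have ht₀0 : t₀ < 0 := ht₀.2
  -- abbreviations
  set a : ℝ := (L/4) ^ (-ν) with ha_def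
  set c : ℝ := L^20 * Real.exp (-(κ*(L/4))) with hc_def
  have hc0 : 0 < c := by positivity
  have ha0 : 0 < a := by
    rw [ha_def]; positivity
  set F : ℝ → ℝ := fun t => (-t) ^ (-ν-1) * Real.exp (β*(t+L/4)) with hF_def
  set H : ℝ → ℝ := fun z => Real.exp (κ*z) + Real.exp (-(κ*z)) with hH_def
  have hHpos : ∀ z, 0 < H z := fun z => by positivity
  have hFpos : ∀ t, t < 0 → 0 < F t := by
    intro t ht
    have : (0:ℝ) < -t := by linarith
    rw [hF_def]; positivity
  -- derivative of F
  set DF : ℝ → ℝ := fun t =>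
    (ν+1) * (-t) ^ (-ν-2) * Real.exp (β*(t+L/4)) + (-t) ^ (-ν-1) * (Real.exp (β*(t+L/4)) * β)
    with hDF_def
  have hFderiv : ∀ t : ℝ, t < 0 → HasDerivAt F (DF t) t := by
    intro t ht
    have hnt : (0:ℝ) < -t := by linarith
    have h1 : HasDerivAt (fun x : ℝ => x ^ (-ν-1)) ((-ν-1) * (-t) ^ (-ν-1-1)) (-t) :=
      Real.hasDerivAt_rpow_const (Or.inl (ne_of_gt hnt))
    have hneg : HasDerivAt (fun s : ℝ => -s) (-1) t := (hasDerivAt_id t).neg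
    have h2 := h1.comp t hneg
    have h3 : HasDerivAt (fun s : ℝ => (-s) ^ (-ν-1)) ((ν+1) * (-t) ^ (-ν-2)) t := by
      refine h2.congr_deriv ?_
      rw [show (-ν-1-1 : ℝ) = -ν-2 by ring]
      ring
    have h4 : HasDerivAt (fun s : ℝ => Real.exp (β*(s+L/4))) (Real.exp (β*(t+L/4)) * β) t := by
      have := (((hasDerivAt_id t).add_const (L/4)).const_mul β).exp
      simpa using this
    exact h3.mul h4
  -- derivative facts for H
  have hHderiv : ∀ x : ℝ, HasDerivAt H (κ * Real.exp (κ*x) - κ * Real.exp (-(κ*x))) x := by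
    intro x
    have e1 : HasDerivAt (fun y : ℝ => Real.exp (κ*y)) (Real.exp (κ*x) * κ) x := by
      have := ((hasDerivAt_id x).const_mul κ).exp
      simpa using this
    have e2 : HasDerivAt (fun y : ℝ => Real.exp (-(κ*y))) (Real.exp (-(κ*x)) * (-κ)) x := by
      have := (((hasDerivAt_id x).const_mul κ).neg).exp
      simpa using this
    have := e1.add e2
    exact this.congr_deriv (by ring)
  have hH1deriv : ∀ x : ℝ, HasDerivAt (fun y => κ * Real.exp (κ*y) - κ * Real.exp (-(κ*y)))
      (κ^2 * H x) x := by
    intro x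
    have e1 : HasDerivAt (fun y : ℝ => Real.exp (κ*y)) (Real.exp (κ*x) * κ) x := by
      have := ((hasDerivAt_id x).const_mul κ).exp
      simpa using this
    have e2 : HasDerivAt (fun y : ℝ => Real.exp (-(κ*y))) (Real.exp (-(κ*x)) * (-κ)) x := by
      have := (((hasDerivAt_id x).const_mul κ).neg).exp
      simpa using this
    have := (e1.const_mul κ).sub (e2.const_mul κ)
    exact this.congr_deriv (by rw [hH_def]; ring)
  -- the rectangle and open rectangle
  set S : Set (ℝ × ℝ) := Set.Ioo (-(L/4)) (L/4) ×ˢ Set.Ioo (-(L/4)) t₀ with hS_def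
  have hSopen : IsOpen S := isOpen_Ioo.prod isOpen_Ioo
  -- section regularity of v
  have hvsec : ∀ t ∈ Set.Ioo (-(L/4)) t₀,
      ContDiffOn ℝ 2 (fun z' => v z' t) (Set.Ioo (-(L/4)) (L/4)) := by
    intro t ht
    have hmap : Set.MapsTo (fun z' : ℝ => (z', t)) (Set.Ioo (-(L/4)) (L/4)) S := by
      intro x hx; exact ⟨hx, ht⟩
    have := (hsm.of_le (WithTop.coe_le_coe.2 le_top) : ContDiffOn ℝ 2 (fun p : ℝ × ℝ => v p.1 p.2) S).comp
      ((contDiff_id.prodMk contDiff_const).contDiffOn) hmap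
    exact this
  have hvt : ∀ z ∈ Set.Ioo (-(L/4)) (L/4), ∀ t ∈ Set.Ioo (-(L/4)) t₀,
      DifferentiableAt ℝ (fun t' => v z t') t := by
    intro z hz t ht
    have hmem : S ∈ 𝓝 (z, t) := hSopen.mem_nhds ⟨hz, ht⟩
    have h1 : ContDiffAt ℝ 1 (fun p : ℝ × ℝ => v p.1 p.2) (z, t) :=
      ((hsm.of_le (by simp) : ContDiffOn ℝ 1 (fun p : ℝ × ℝ => v p.1 p.2) S).contDiffAt hmem)
    have h2 : ContDiffAt ℝ 1 (fun t' : ℝ => ((z, t') : ℝ × ℝ)) t :=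
      contDiffAt_const.prodMk contDiffAt_id
    exact (h1.comp t h2).differentiableAt one_ne_zero
  -- main via maximum principle
  intro z hz t ht
  have key := heat_max_principle hab hs
    (φ := fun z t => a + c * (F t * H z) - v z t)
    ?_ ?_ ?_ ?_
  · have := key z hz t ht
    simp only [hF_def, hH_def] at this
    nlinarith [this]
  · -- continuity
    apply ContinuousOn.sub ?_ hcont
    apply ContinuousOn.add continuousOn_const
    apply ContinuousOn.mul continuousOn_const
    apply ContinuousOn.mul
    · apply ContinuousOn.mul
      · intro p hp
        have hp2 : p.2 < 0 := lt_of_le_of_lt hp.2.2 ht₀0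
        have hne : -p.2 ≠ 0 := ne_of_gt (by linarith)
        exact ((continuous_neg.comp continuous_snd).continuousAt.rpow_const
          (Or.inl hne)).continuousWithinAt
      · fun_prop
    · fun_prop
  · -- interior conditions
    intro z' hz' t' ht'
    have hnt' : t' < 0 := lt_trans ht'.2 ht₀0
    -- W t-section derivative
    have hWt : HasDerivAt (fun s => a + c * (F s * H z')) (c * (DF t' * H z')) t' := by
      have := ((hFderiv t' hnt').mul_const (H z')).const_mul c |>.const_add a
      simpa [mul_assoc] using this
    -- v facts
    have hvt' := hvt z' hz' t' ht'
    have hvsec' := hvsec t' ht'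
    have hIomem : Set.Ioo (-(L/4)) (L/4) ∈ 𝓝 z' := isOpen_Ioo.mem_nhds hz'
    have hvdiff : ∀ᶠ x in 𝓝 z', DifferentiableAt ℝ (fun z'' => v z'' t') x := by
      filter_upwards [hIomem] with x hx
      exact ((hvsec'.differentiableOn (by norm_num)).differentiableAt
        (isOpen_Ioo.mem_nhds hx))
    have hvd2 : DifferentiableAt ℝ (deriv (fun z'' => v z'' t')) z' := by
      have h := hvsec'.deriv_of_isOpen isOpen_Ioo
        (show (1:WithTop ℕ∞) + 1 ≤ 2 by norm_num)
      exact (h.differentiableOn one_ne_zero).differentiableAt (isOpen_Ioo.mem_nhds hz')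
    -- W z-section derivative facts
    have hWsec1 : ∀ x : ℝ, HasDerivAt (fun z'' => a + c * (F t' * H z''))
        (c * F t' * (κ * Real.exp (κ*x) - κ * Real.exp (-(κ*x)))) x := by
      intro x
      have := ((hHderiv x).const_mul (F t')).const_mul c |>.const_add a
      simpa [mul_assoc] using this
    refine ⟨(hWt.differentiableAt).sub hvt', ?_, ?_, ?_⟩
    · filter_upwards [hvdiff] with x hx
      exact ((hWsec1 x).differentiableAt).sub hx
    · -- differentiability of the derivative of the z-section
      have hEq : deriv (fun z'' => a + c * (F t' * H z'') - v z'' t')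
          =ᶠ[𝓝 z'] fun x => c * F t' * (κ * Real.exp (κ*x) - κ * Real.exp (-(κ*x)))
            - deriv (fun z'' => v z'' t') x := by
        filter_upwards [hIomem, hvdiff] with x hx hdx
        rw [deriv_fun_sub ((hWsec1 x).differentiableAt) hdx, (hWsec1 x).deriv]
      rw [hEq.differentiableAt_iff]
      exact (((hH1deriv z').const_mul (c * F t')).differentiableAt).sub hvd2
    · -- strict heat operator inequality
      have hEq : deriv (fun z'' => a + c * (F t' * H z'') - v z'' t')
          =ᶠ[𝓝 z'] fun x => c * F t' * (κ * Real.exp (κ*x) - κ * Real.exp (-(κ*x)))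
            - deriv (fun z'' => v z'' t') x := by
        filter_upwards [hIomem, hvdiff] with x hx hdx
        rw [deriv_fun_sub ((hWsec1 x).differentiableAt) hdx, (hWsec1 x).deriv]
      rw [hEq.deriv_eq]
      rw [deriv_fun_sub (((hH1deriv z').const_mul (c * F t')).differentiableAt) hvd2]
      rw [((hH1deriv z').const_mul (c * F t')).deriv]
      have hTder : deriv (fun t'' => a + c * (F t'' * H z') - v z' t'') t'
          = c * (DF t' * H z') - deriv (fun t'' => v z' t'') t' := by
        have : (fun t'' => a + c * (F t'' * H z') - v z' t'')
            = (fun t'' => (a + c * (F t'' * H z')) - v z' t'') := rfl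
        rw [this, deriv_fun_sub (hWt.differentiableAt) hvt', hWt.deriv]
      rw [hTder, hpde z' t' hz' ht']
      have hstrict : c * F t' * (κ^2 * H z') < c * (DF t' * H z') := by
        have hnt'' : (0:ℝ) < -t' := by linarith
        have hb := hsup t' ht'
        have hrw : (-t') ^ (-ν-1) = (-t') ^ (-ν-2) * (-t') := by
          rw [show (-ν-1 : ℝ) = (-ν-2) + 1 by ring, Real.rpow_add_one (ne_of_gt hnt'')]
        have hdiff : c * (DF t' * H z') - c * F t' * (κ^2 * H z')
            = c * H z' * Real.exp (β*(t'+L/4)) * ((-t') ^ (-ν-2))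
              * ((ν+1) + (β - κ^2) * (-t')) := by
          rw [hDF_def, hF_def]
          simp only []
          rw [hrw]
          ring
        have hpos : 0 < c * H z' * Real.exp (β*(t'+L/4)) * ((-t') ^ (-ν-2))
            * ((ν+1) + (β - κ^2) * (-t')) := by
          have h1 : (0:ℝ) < (-t') ^ (-ν-2) := Real.rpow_pos_of_pos hnt'' _
          have h2 := hHpos z'
          positivity
        have h5 : 0 < c * (DF t' * H z') - c * F t' * (κ^2 * H z') := by
          rw [hdiff]; exact hpos
        linarith
      linarith
  · -- boundary values
    intro s hsmem
    have hs0 : (0:ℝ) < -s := by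
      have := hsmem.2; linarith
    set X : ℝ := Real.exp (κ*(L/4)) + Real.exp (-(κ*(L/4))) with hX_def
    have hkey : L^20 * (-s) ^ (-ν-1) ≤ c * (F s * X) := by
      have e1 : 1 ≤ Real.exp (β*(s+L/4)) :=
        Real.one_le_exp (mul_nonneg hβ (by linarith [hsmem.1]))
      have e0 : Real.exp (-(κ*(L/4))) * Real.exp (κ*(L/4)) = 1 := by
        rw [← Real.exp_add]; simp
      have e2 : 1 ≤ Real.exp (-(κ*(L/4))) * X := by
        rw [hX_def]
        nlinarith [Real.exp_pos (-(κ*(L/4))), Real.exp_pos (κ*(L/4))]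
      have e3 : 1 ≤ Real.exp (β*(s+L/4)) * (Real.exp (-(κ*(L/4))) * X) := by
        nlinarith [Real.exp_pos (β*(s+L/4))]
      have hxpos : (0:ℝ) < L^20 * (-s) ^ (-ν-1) := by positivity
      calc L^20 * (-s) ^ (-ν-1) = L^20 * (-s) ^ (-ν-1) * 1 := (mul_one _).symm
        _ ≤ L^20 * (-s) ^ (-ν-1) *
            (Real.exp (β*(s+L/4)) * (Real.exp (-(κ*(L/4))) * X)) :=
          mul_le_mul_of_nonneg_left e3 hxpos.le
        _ = c * (F s * X) := by rw [hc_def, hF_def]; ring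
    have hHa : H (-(L/4)) = X := by
      rw [hH_def, hX_def]
      simp only [mul_neg, neg_neg]
      ring
    have hHb : H (L/4) = X := rfl
    have hb := hbv s hsmem
    clear_value a c F X
    constructor
    · have : c * (F s * H (-(L/4))) = c * (F s * X) := by rw [hHa]
      rw [this]
      linarith [hb.1, ha0]
    · have : c * (F s * H (L/4)) = c * (F s * X) := by rw [hHb]
      rw [this]
      linarith [hb.2, ha0]
  · -- initial slice
    intro z' hz'
    have hF0 : 0 < F (-(L/4)) := hFpos _ (by linarith)
    have hH0 := hHpos z'
    have := hiv z' hz'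
    have hp := mul_pos hc0 (mul_pos hF0 hH0)
    clear_value a c F H
    nlinarith [hp]


/-- Two-sided barrier estimate. -/
lemma barrier_abs {ν L t₀ κ β : ℝ} (hν : 0 < ν) (hL : (10:ℝ)^5 ≤ L)
    (ht₀ : t₀ ∈ Set.Ico (-1000 : ℝ) 0)
    (hκ : 0 < κ) (hβ : 0 ≤ β)
    (hsup : ∀ t ∈ Set.Ioo (-(L/4)) t₀, 0 < (ν + 1) + (β - κ^2) * (-t))
    (u : ℝ → ℝ → ℝ)
    (hcont : ContinuousOn (fun p : ℝ × ℝ => u p.1 p.2)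
      (Set.Icc (-(L / 4)) (L / 4) ×ˢ Set.Icc (-(L / 4)) t₀))
    (hsm : ContDiffOn ℝ (⊤ : ℕ∞) (fun p : ℝ × ℝ => u p.1 p.2)
      (Set.Ioo (-(L / 4)) (L / 4) ×ˢ Set.Ioo (-(L / 4)) t₀))
    (hpde : ∀ z t : ℝ, z ∈ Set.Ioo (-(L / 4)) (L / 4) → t ∈ Set.Ioo (-(L / 4)) t₀ →
      deriv (fun t' => u z t') t = deriv (deriv (fun z' => u z' t)) z)
    (hiv : ∀ z ∈ Set.Icc (-(L / 4)) (L / 4), |u z (-(L / 4))| ≤ (L / 4) ^ (-ν))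
    (hbv : ∀ s ∈ Set.Icc (-(L / 4)) t₀,
      |u (-(L / 4)) s| ≤ L ^ 20 * (-s) ^ (-ν - 1) ∧ |u (L / 4) s| ≤ L ^ 20 * (-s) ^ (-ν - 1)) :
    ∀ z ∈ Set.Icc (-(L/4)) (L/4), ∀ t ∈ Set.Icc (-(L/4)) t₀,
      |u z t| ≤ (L/4) ^ (-ν) + (L^20 * Real.exp (-(κ*(L/4)))) *
        (((-t) ^ (-ν-1) * Real.exp (β*(t+L/4))) * (Real.exp (κ*z) + Real.exp (-(κ*z)))) := by
  have hup := barrier_one_sided hν hL ht₀ hκ hβ hsup u hcont hsm hpde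
    (fun z hz => (abs_le.1 (hiv z hz)).2)
    (fun s hsm' => ⟨(abs_le.1 (hbv s hsm').1).2, (abs_le.1 (hbv s hsm').2).2⟩)
  have hdn := barrier_one_sided hν hL ht₀ hκ hβ hsup (fun z t => -(u z t))
    hcont.neg hsm.neg
    (by
      intro z t hz ht
      have h1 : deriv (fun t' => -(u z t')) t = -deriv (fun t' => u z t') t := deriv.neg
      have h2 : (deriv fun z' => -(u z' t)) = fun x => -deriv (fun z' => u z' t) x :=
        funext fun x => deriv.neg
      have h3 : deriv (fun x => -deriv (fun z' => u z' t) x) z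
          = -deriv (deriv fun z' => u z' t) z := deriv.neg
      rw [h1, h2, h3, hpde z t hz ht])
    (fun z hz => by
      have := (abs_le.1 (hiv z hz)).1; linarith)
    (fun s hsm' => by
      constructor
      · have := (abs_le.1 (hbv s hsm').1).1; linarith
      · have := (abs_le.1 (hbv s hsm').2).1; linarith)
  intro z hz t ht
  have h1 := hup z hz t ht
  have h2 := hdn z hz t ht
  rw [abs_le]
  constructor <;> linarith

/-- `exp (-√ν) ≤ (1 + ν^(-1/2))^(-ν)` for `ν > 0`. -/
lemma exp_neg_sqrt_le {ν : ℝ} (hν : 0 < ν) :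
    Real.exp (-Real.sqrt ν) ≤ (1 + ν ^ (-(1:ℝ)/2)) ^ (-ν) := by
  have hx : 0 < ν ^ (-(1:ℝ)/2) := Real.rpow_pos_of_pos hν _
  have hpos : (0:ℝ) < 1 + ν ^ (-(1:ℝ)/2) := by linarith
  rw [Real.rpow_def_of_pos hpos]
  apply Real.exp_le_exp.2
  have hlog : Real.log (1 + ν ^ (-(1:ℝ)/2)) ≤ ν ^ (-(1:ℝ)/2) := by
    have := Real.log_le_sub_one_of_pos hpos
    linarith
  have hmul : ν * ν ^ (-(1:ℝ)/2) = Real.sqrt ν := by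
    rw [Real.sqrt_eq_rpow, show (1/2 : ℝ) = 1 + (-(1:ℝ)/2) by norm_num,
      Real.rpow_add hν, Real.rpow_one]
  nlinarith [mul_le_mul_of_nonneg_left hlog hν.le]


/-- Converting the barrier estimate into the stated bound. -/
lemma final_step {ν L t₀ κ β z t : ℝ} {u : ℝ → ℝ → ℝ} (hν : 0 < ν) (hL : (10:ℝ)^5 ≤ L)
    (ht₀ : t₀ ∈ Set.Ico (-1000 : ℝ) 0)
    (hκ : 0 < κ) (hβ : 0 ≤ β)
    (hz : z ∈ Set.Icc (-1000 : ℝ) 1000) (ht : t ∈ Set.Icc (-1000 : ℝ) t₀)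
    (hexp : β*(L/4) + 1000*κ - κ*(L/4) ≤ -(L/100) - Real.sqrt ν)
    (habs : |u z t| ≤ (L/4) ^ (-ν) + (L^20 * Real.exp (-(κ*(L/4)))) *
        (((-t) ^ (-ν-1) * Real.exp (β*(t+L/4))) * (Real.exp (κ*z) + Real.exp (-(κ*z))))) :
    |u z t| ≤ 2 * (L / 4) ^ (-ν)
      + 2 * L ^ 20 * (-t) ^ (-ν - 1) *
        (Real.exp (-L / 100) * (1 + ν ^ (-(1 : ℝ) / 2)) ^ (-ν)
          + Real.exp (-L ^ 2 * Real.sqrt ν / (200 * (-t)))) := by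
  have hL0 : (0:ℝ) < L := by nlinarith
  have htneg : t < 0 := lt_of_le_of_lt ht.2 ht₀.2
  have hg : 0 < (-t) ^ (-ν-1) := Real.rpow_pos_of_pos (by linarith) _
  have ha0 : (0:ℝ) < (L/4) ^ (-ν) := Real.rpow_pos_of_pos (by linarith) _
  set E1 : ℝ := Real.exp (-L / 100) * (1 + ν ^ (-(1 : ℝ) / 2)) ^ (-ν) with hE1_def
  set E2 : ℝ := Real.exp (-L ^ 2 * Real.sqrt ν / (200 * (-t))) with hE2_def
  have hE2pos : 0 < E2 := Real.exp_pos _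
  -- bound the z/t dependent factor
  have hX : Real.exp (β*(t+L/4)) * Real.exp (-(κ*(L/4))) * (Real.exp (κ*z) + Real.exp (-(κ*z)))
      ≤ 2 * E1 := by
    have h1 : Real.exp (β*(t+L/4)) ≤ Real.exp (β*(L/4)) := by
      apply Real.exp_le_exp.2
      have : t + L/4 ≤ L/4 := by linarith
      nlinarith
    have h2 : Real.exp (κ*z) ≤ Real.exp (1000*κ) := by
      apply Real.exp_le_exp.2
      have := hz.2; nlinarith
    have h3 : Real.exp (-(κ*z)) ≤ Real.exp (1000*κ) := by
      apply Real.exp_le_exp.2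
      have := hz.1; nlinarith
    have step : Real.exp (β*(t+L/4)) * Real.exp (-(κ*(L/4)))
          * (Real.exp (κ*z) + Real.exp (-(κ*z)))
        ≤ Real.exp (β*(L/4)) * Real.exp (-(κ*(L/4))) * (2 * Real.exp (1000*κ)) := by
      have e2 := Real.exp_pos (-(κ*(L/4)))
      have e5 := Real.exp_pos (β*(L/4))
      have hsum : Real.exp (κ*z) + Real.exp (-(κ*z)) ≤ 2 * Real.exp (1000*κ) := by linarith
      have hAB : Real.exp (β*(t+L/4)) * (Real.exp (κ*z) + Real.exp (-(κ*z)))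
          ≤ Real.exp (β*(L/4)) * (2 * Real.exp (1000*κ)) :=
        mul_le_mul h1 hsum (by positivity) e5.le
      calc Real.exp (β*(t+L/4)) * Real.exp (-(κ*(L/4)))
            * (Real.exp (κ*z) + Real.exp (-(κ*z)))
          = (Real.exp (β*(t+L/4)) * (Real.exp (κ*z) + Real.exp (-(κ*z))))
            * Real.exp (-(κ*(L/4))) := by ring
        _ ≤ (Real.exp (β*(L/4)) * (2 * Real.exp (1000*κ))) * Real.exp (-(κ*(L/4))) :=
            mul_le_mul_of_nonneg_right hAB e2.le
        _ = Real.exp (β*(L/4)) * Real.exp (-(κ*(L/4))) * (2 * Real.exp (1000*κ)) := by ring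
    have ident : Real.exp (β*(L/4)) * Real.exp (-(κ*(L/4))) * (2 * Real.exp (1000*κ))
        = 2 * Real.exp (β*(L/4) + 1000*κ - κ*(L/4)) := by
      rw [show β*(L/4) + 1000*κ - κ*(L/4) = β*(L/4) + (-(κ*(L/4))) + 1000*κ by ring]
      rw [Real.exp_add, Real.exp_add]
      ring
    have step2 : Real.exp (β*(L/4) + 1000*κ - κ*(L/4))
        ≤ Real.exp (-(L/100)) * Real.exp (-Real.sqrt ν) := by
      rw [← Real.exp_add]
      exact Real.exp_le_exp.2 (by linarith)
    have step3 : Real.exp (-(L/100)) * Real.exp (-Real.sqrt ν) ≤ E1 := by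
      rw [hE1_def, show -L/100 = -(L/100) by ring]
      exact mul_le_mul_of_nonneg_left (exp_neg_sqrt_le hν) (Real.exp_pos _).le
    calc Real.exp (β*(t+L/4)) * Real.exp (-(κ*(L/4))) * (Real.exp (κ*z) + Real.exp (-(κ*z)))
        ≤ Real.exp (β*(L/4)) * Real.exp (-(κ*(L/4))) * (2 * Real.exp (1000*κ)) := step
      _ = 2 * Real.exp (β*(L/4) + 1000*κ - κ*(L/4)) := ident
      _ ≤ 2 * (Real.exp (-(L/100)) * Real.exp (-Real.sqrt ν)) := by linarith
      _ ≤ 2 * E1 := by linarith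
  have hmain : (L^20 * Real.exp (-(κ*(L/4)))) *
      (((-t) ^ (-ν-1) * Real.exp (β*(t+L/4))) * (Real.exp (κ*z) + Real.exp (-(κ*z))))
      ≤ 2 * L^20 * (-t) ^ (-ν-1) * E1 := by
    have hrw : (L^20 * Real.exp (-(κ*(L/4)))) *
        (((-t) ^ (-ν-1) * Real.exp (β*(t+L/4))) * (Real.exp (κ*z) + Real.exp (-(κ*z))))
        = (L^20 * (-t) ^ (-ν-1)) *
          (Real.exp (β*(t+L/4)) * Real.exp (-(κ*(L/4)))
            * (Real.exp (κ*z) + Real.exp (-(κ*z)))) := by ring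
    rw [hrw]
    have hpos : (0:ℝ) ≤ L^20 * (-t) ^ (-ν-1) := by positivity
    calc (L^20 * (-t) ^ (-ν-1)) *
          (Real.exp (β*(t+L/4)) * Real.exp (-(κ*(L/4)))
            * (Real.exp (κ*z) + Real.exp (-(κ*z))))
        ≤ (L^20 * (-t) ^ (-ν-1)) * (2 * E1) := mul_le_mul_of_nonneg_left hX hpos
      _ = 2 * L^20 * (-t) ^ (-ν-1) * E1 := by ring
  have hE2 : 0 ≤ 2 * L^20 * (-t) ^ (-ν-1) * E2 := by positivity
  calc |u z t| ≤ (L/4) ^ (-ν) + (L^20 * Real.exp (-(κ*(L/4)))) *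
        (((-t) ^ (-ν-1) * Real.exp (β*(t+L/4))) * (Real.exp (κ*z) + Real.exp (-(κ*z)))) := habs
    _ ≤ (L/4) ^ (-ν) + 2 * L^20 * (-t) ^ (-ν-1) * E1 := by linarith
    _ ≤ 2 * (L/4) ^ (-ν) + 2 * L^20 * (-t) ^ (-ν-1) * (E1 + E2) := by nlinarith
    _ = 2 * (L / 4) ^ (-ν) + 2 * L ^ 20 * (-t) ^ (-ν - 1) * (E1 + E2) := by norm_num



end HeatAux

/-- The scalar mode estimate from Step 1 of the proof of Proposition 3.1:
a solution of the one-dimensional heat equation on `[−L/4, L/4] × [−L/4, t₀]`, small on the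
initial slice and with fast-decaying boundary values, is controlled on the central window
`[−1000,1000] × [−1000,t₀]`. -/
theorem heat_equation_mode_estimate (ν₀ : ℝ) (hν₀ : 0 < ν₀) :
    ∃ C L₀ : ℝ, 0 < C ∧ (10 ^ 5 : ℝ) ≤ L₀ ∧
      ∀ ν L t₀ : ℝ, ν₀ ≤ ν → L₀ ≤ L → t₀ ∈ Set.Ico (-1000 : ℝ) 0 →
      ∀ u : ℝ → ℝ → ℝ,
        ContinuousOn (fun p : ℝ × ℝ => u p.1 p.2)
          (Set.Icc (-(L / 4)) (L / 4) ×ˢ Set.Icc (-(L / 4)) t₀) →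
        ContDiffOn ℝ (⊤ : ℕ∞) (fun p : ℝ × ℝ => u p.1 p.2)
          (Set.Ioo (-(L / 4)) (L / 4) ×ˢ Set.Ioo (-(L / 4)) t₀) →
        (∀ z t : ℝ, z ∈ Set.Ioo (-(L / 4)) (L / 4) → t ∈ Set.Ioo (-(L / 4)) t₀ →
          deriv (fun t' => u z t') t = deriv (deriv (fun z' => u z' t)) z) →
        (∀ z ∈ Set.Icc (-(L / 4)) (L / 4), |u z (-(L / 4))| ≤ (L / 4) ^ (-ν)) →
        (∀ s ∈ Set.Icc (-(L / 4)) t₀,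
          |u (-(L / 4)) s| ≤ L ^ 20 * (-s) ^ (-ν - 1) ∧
          |u (L / 4) s| ≤ L ^ 20 * (-s) ^ (-ν - 1)) →
        ∀ z t : ℝ, z ∈ Set.Icc (-1000 : ℝ) 1000 → t ∈ Set.Icc (-1000 : ℝ) t₀ →
          |u z t| ≤ C * (L / 4) ^ (-ν)
            + C * L ^ 20 * (-t) ^ (-ν - 1) *
              (Real.exp (-L / 100) * (1 + ν ^ (-(1 : ℝ) / 2)) ^ (-ν)
                + Real.exp (-L ^ 2 * Real.sqrt ν / (200 * (-t)))) := by
  refine ⟨2, 10^5, by norm_num, le_refl _, ?_⟩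
  intro ν L t₀ hν hL ht₀ u hcont hsm hpde hiv hbv z t hz ht
  have hν0 : 0 < ν := lt_of_lt_of_le hν₀ hν
  have hL0 : (0:ℝ) < L := by nlinarith
  have hbig : (25000:ℝ) ≤ L/4 := by nlinarith
  have hz' : z ∈ Set.Icc (-(L/4)) (L/4) := by
    constructor
    · have := hz.1; linarith
    · have := hz.2; linarith
  have ht' : t ∈ Set.Icc (-(L/4)) t₀ := by
    constructor
    · have := ht.1; linarith
    · exact ht.2
  have hsν0 : 0 < Real.sqrt ν := Real.sqrt_pos.2 hν0
  rcases le_total ν (L/400) with hcase | hcase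
  · -- small ν : κ = 2/5, β = 4/25
    have hsup : ∀ s ∈ Set.Ioo (-(L/4)) t₀, 0 < (ν + 1) + ((4/25 : ℝ) - (2/5 : ℝ)^2) * (-s) := by
      intro s _
      norm_num
      linarith
    have habs := barrier_abs hν0 hL ht₀ (by norm_num : (0:ℝ) < 2/5)
      (by norm_num : (0:ℝ) ≤ 4/25) hsup u hcont hsm hpde hiv hbv z hz' t ht'
    have hsν : Real.sqrt ν ≤ L/2000 := by
      have h1 : ν ≤ (L/2000)^2 := by nlinarith
      calc Real.sqrt ν ≤ Real.sqrt ((L/2000)^2) := Real.sqrt_le_sqrt h1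
        _ = L/2000 := Real.sqrt_sq (by linarith)
    have hexp : (4/25 : ℝ)*(L/4) + 1000*(2/5 : ℝ) - (2/5 : ℝ)*(L/4) ≤ -(L/100) - Real.sqrt ν := by
      linarith
    exact final_step hν0 hL ht₀ (by norm_num) (by norm_num) hz ht hexp habs
  · -- large ν : κ = 2√ν/√L, β = 0
    have hsL0 : 0 < Real.sqrt L := Real.sqrt_pos.2 hL0
    set κ : ℝ := 2 * Real.sqrt ν / Real.sqrt L with hκ_def
    have hκ0 : 0 < κ := by positivity
    have hκ2 : κ^2 = 4*ν/L := by
      rw [hκ_def, div_pow, mul_pow, Real.sq_sqrt hν0.le, Real.sq_sqrt hL0.le]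
      norm_num
    have hsup : ∀ s ∈ Set.Ioo (-(L/4)) t₀, 0 < (ν + 1) + ((0:ℝ) - κ^2) * (-s) := by
      intro s hsmem
      rw [hκ2]
      have hs1 : -s < L/4 := by have := hsmem.1; linarith
      have h1 : (4*ν/L) * (-s) ≤ (4*ν/L) * (L/4) :=
        mul_le_mul_of_nonneg_left hs1.le (by positivity)
      have h2 : (4*ν/L) * (L/4) = ν := by field_simp
      nlinarith
    have habs := barrier_abs hν0 hL ht₀ hκ0 le_rfl hsup u hcont hsm hpde hiv hbv z hz' t ht'
    have hLsq : Real.sqrt L * Real.sqrt L = L := Real.mul_self_sqrt hL0.le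
    have hsL100 : (100:ℝ) ≤ Real.sqrt L := by
      have : (100:ℝ) = Real.sqrt (100^2) := (Real.sqrt_sq (by norm_num)).symm
      rw [this]
      exact Real.sqrt_le_sqrt (by nlinarith)
    have h20 : Real.sqrt L ≤ 20 * Real.sqrt ν := by
      have e1 : Real.sqrt L = 20 * Real.sqrt (L/400) := by
        rw [show L/400 = (1/400) * L by ring, Real.sqrt_mul (by norm_num) L,
          show Real.sqrt (1/400) = 1/20 by
            rw [show (1/400:ℝ) = (1/20)^2 by norm_num, Real.sqrt_sq (by norm_num)]]
        ring
      rw [e1]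
      have := Real.sqrt_le_sqrt hcase
      linarith
    have hκL : κ * Real.sqrt L = 2 * Real.sqrt ν := by
      rw [hκ_def]; field_simp
    have hκL4 : κ * (L/4) = Real.sqrt ν * Real.sqrt L / 2 := by
      rw [hκ_def, div_mul_eq_mul_div, div_eq_iff hsL0.ne']
      linear_combination (-Real.sqrt ν/2) * hLsq
    have h1000κ : 1000 * κ ≤ 20 * Real.sqrt ν := by
      rw [hκ_def]
      rw [show 1000 * (2 * Real.sqrt ν / Real.sqrt L) = 2000 * Real.sqrt ν / Real.sqrt L by ring]
      rw [div_le_iff₀ hsL0]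
      nlinarith
    have hL100 : L/100 ≤ Real.sqrt ν * Real.sqrt L / 5 := by
      nlinarith [mul_le_mul_of_nonneg_right h20 hsL0.le, hLsq]
    have hexp : (0:ℝ)*(L/4) + 1000*κ - κ*(L/4) ≤ -(L/100) - Real.sqrt ν := by
      rw [hκL4]
      have hprod : 100 * Real.sqrt ν ≤ Real.sqrt ν * Real.sqrt L := by
        nlinarith
      linarith
    exact final_step hν0 hL ht₀ hκ0 le_rfl hz ht hexp habs
end
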